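/- arXiv:1305.1109 — 3 statements merged into one kernel-verified Lean document; each statement's English description precedes it below -/
import Mathlib

section
/- Let w : [T₀,T₁] → ℝ^ℤ be a C¹ solution of the cooperative linear system such that w(t) has sub-exponential growth for every t ∈ [T₀,T₁], and let m < n be integers such that w_m(t) ≠ 0 and w_n(t) ≠ 0 for all t ∈ [T₀,T₁]. Then the function t ↦ z_{m,n}(w(t)) is non-increasing on [T₀,T₁]. -/
open Set Filter Topology

/-- `w` has a zero at position `j`: the graph of `i ↦ w i` crosses `0` in `[j, j+1)`. -/
def zeroAt (w : ℤ → ℝ) (j : ℤ) : Prop :=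
  ∃ x : ℝ, 0 ≤ x ∧ x < 1 ∧ w j + (w (j + 1) - w j) * x = 0

/-- The number of positions `j` with `m ≤ j ≤ n - 1` at which `w` has a zero. -/
noncomputable def zCount (w : ℤ → ℝ) (m n : ℤ) : ℕ :=
  Set.ncard {j : ℤ | m ≤ j ∧ j < n ∧ zeroAt w j}

/-- A configuration `w : ℤ → ℝ` has sub-exponential growth:
`limsup_{|j| → ∞} (log |w j|)/|j| ≤ 0`. -/
def SubExp (w : ℤ → ℝ) : Prop :=
  ∀ ε : ℝ, 0 < ε → ∀ᶠ j in (Filter.cofinite : Filter ℤ), Real.log |w j| ≤ ε * |(j : ℝ)|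

lemma zeroAt_iff (w : ℤ → ℝ) (j : ℤ) :
    zeroAt w j ↔ w j = 0 ∨ w j * w (j + 1) < 0 := by
  constructor
  · rintro ⟨x, hx0, hx1, hx⟩
    by_cases h : w j = 0
    · exact Or.inl h
    · right
      have hxne : x ≠ 0 := by
        intro he; rw [he] at hx; simp at hx; exact h hx
      have hx0' : 0 < x := hx0.lt_of_ne (Ne.symm hxne)
      have h1 : (w j + (w (j + 1) - w j) * x) * w j = 0 := by rw [hx]; ring
      have hsq : 0 < w j * w j := mul_self_pos.mpr h
      nlinarith [h1, hsq]
  · rintro (h | h)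
    · exact ⟨0, le_refl 0, one_pos, by simp [h]⟩
    · have hj : w j ≠ 0 := fun hj => by rw [hj] at h; simp at h
      have hj1 : 0 < w j * (w j - w (j+1)) := by nlinarith [mul_self_pos.mpr hj]
      have hd : w j - w (j+1) ≠ 0 := by
        intro hd; rw [hd] at hj1; simp at hj1
      refine ⟨w j / (w j - w (j+1)), ?_, ?_, ?_⟩
      · rcases lt_or_gt_of_ne hj with hn | hp
        · have h2 : w j - w (j+1) < 0 := by nlinarith
          exact le_of_lt (div_pos_of_neg_of_neg hn h2)
        · have h2 : 0 < w j - w (j+1) := by nlinarith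
          exact le_of_lt (div_pos hp h2)
      · rcases lt_or_gt_of_ne hj with hn | hp
        · have h2 : w j - w (j+1) < 0 := by nlinarith
          rw [div_lt_one_iff]; right; right
          exact ⟨h2, by nlinarith⟩
        · have h2 : 0 < w j - w (j+1) := by nlinarith
          rw [div_lt_one_iff]; left
          exact ⟨h2, by nlinarith⟩
      · field_simp
        ring

open scoped Classical in
lemma zCount_eq (w : ℤ → ℝ) (m n : ℤ) :
    zCount w m n = ((Finset.Ico m n).filter fun j => zeroAt w j).card := by
  rw [zCount, ← Set.ncard_coe_finset]
  congr 1
  ext j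
  simp [Finset.mem_filter, Finset.mem_Ico, and_assoc]

lemma zCount_split (w : ℤ → ℝ) {m k n : ℤ} (h1 : m ≤ k) (h2 : k ≤ n) :
    zCount w m n = zCount w m k + zCount w k n := by
  classical
  rw [zCount_eq, zCount_eq, zCount_eq, ← Finset.card_union_of_disjoint, ← Finset.filter_union]
  · congr 1
    rw [Finset.Ico_union_Ico_eq_Ico h1 h2]
  · exact Finset.disjoint_filter_filter (Finset.Ico_disjoint_Ico_consecutive m k n)

lemma zCount_le_of_not (w : ℤ → ℝ) {m n j₀ : ℤ} (hj₀ : m ≤ j₀) (hj₀' : j₀ < n)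
    (h : ¬ zeroAt w j₀) : zCount w m n ≤ (n - m).toNat - 1 := by
  classical
  rw [zCount_eq]
  have hsub : (Finset.Ico m n).filter (fun j => zeroAt w j) ⊆ (Finset.Ico m n).erase j₀ := by
    intro j hj
    rw [Finset.mem_filter] at hj
    rw [Finset.mem_erase]
    refine ⟨fun he => h (he ▸ hj.2), hj.1⟩
  calc ((Finset.Ico m n).filter fun j => zeroAt w j).card
      ≤ ((Finset.Ico m n).erase j₀).card := Finset.card_le_card hsub
    _ = (Finset.Ico m n).card - 1 :=
        Finset.card_erase_of_mem (Finset.mem_Ico.mpr ⟨hj₀, hj₀'⟩)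
    _ = (n - m).toNat - 1 := by rw [Int.card_Ico]

lemma zCount_ge_of_all (w : ℤ → ℝ) {m n j₀ : ℤ}
    (h : ∀ j, m ≤ j → j < n → j ≠ j₀ → zeroAt w j) :
    (n - m).toNat - 1 ≤ zCount w m n := by
  classical
  rw [zCount_eq]
  have hsub : (Finset.Ico m n).erase j₀ ⊆ (Finset.Ico m n).filter (fun j => zeroAt w j) := by
    intro j hj
    rw [Finset.mem_erase] at hj
    rw [Finset.mem_filter]
    have := Finset.mem_Ico.mp hj.2
    exact ⟨hj.2, h j this.1 this.2 hj.1⟩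
  calc (n - m).toNat - 1 = (Finset.Ico m n).card - 1 := by rw [Int.card_Ico]
    _ ≤ ((Finset.Ico m n).erase j₀).card := Finset.pred_card_le_card_erase
    _ ≤ _ := Finset.card_le_card hsub

lemma zCount_block (w : ℤ → ℝ) {m n : ℤ} (hmn : m + 1 < n) (hm : w m ≠ 0)
    (hz : ∀ j, m < j → j < n → w j = 0) :
    zCount w m n = (n - m - 1).toNat := by
  classical
  rw [zCount_eq]
  have : (Finset.Ico m n).filter (fun j => zeroAt w j) = Finset.Ico (m+1) n := by
    ext j
    simp only [Finset.mem_filter, Finset.mem_Ico]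
    constructor
    · rintro ⟨⟨h1, h2⟩, hza⟩
      refine ⟨?_, h2⟩
      rcases eq_or_lt_of_le h1 with he | hlt
      · exfalso
        rw [zeroAt_iff] at hza
        rcases hza with h0 | hprod
        · exact hm (he ▸ h0)
        · rw [← he] at hprod
          rw [hz (m+1) (by omega) (by omega)] at hprod
          simp at hprod
      · omega
    · rintro ⟨h1, h2⟩
      refine ⟨⟨by omega, h2⟩, ?_⟩
      rw [zeroAt_iff]
      exact Or.inl (hz j (by omega) h2)
  rw [this, Int.card_Ico]
  congr 1
  omega

/-- Backward comparison: if `g t₀ = 0` and `g' ≤ -c(k+1)(t₀-s)^k` before `t₀`,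
then `g t ≥ c (t₀-t)^(k+1)` before `t₀`. -/
lemma decay_lower {t₁ t₀ : ℝ} (h : t₁ ≤ t₀) (g G : ℝ → ℝ) (k : ℕ) {cc : ℝ}
    (hg : ∀ s ∈ Set.Icc t₁ t₀, HasDerivWithinAt g (G s) (Set.Icc t₁ t₀) s)
    (hG : ∀ s ∈ Set.Ioo t₁ t₀, G s ≤ -(cc * (k+1) * (t₀ - s)^k))
    (hgt : g t₀ = 0) :
    ∀ t ∈ Set.Icc t₁ t₀, cc * (t₀ - t)^(k+1) ≤ g t := by
  intro t ht
  have hFd : ∀ s : ℝ, HasDerivAt (fun u => cc * (t₀ - u)^(k+1))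
      (-(cc * (k+1) * (t₀ - s)^k)) s := by
    intro s
    have h1 : HasDerivAt (fun u : ℝ => t₀ - u) (-1) s := (hasDerivAt_id s).const_sub t₀
    have h2 := (h1.pow (k+1)).const_mul cc
    refine h2.congr_deriv ?_
    push_cast
    ring
  have hanti : AntitoneOn (fun s => g s - cc * (t₀ - s)^(k+1)) (Set.Icc t₁ t₀) := by
    apply antitoneOn_of_hasDerivWithinAt_nonpos (convex_Icc t₁ t₀)
      (f' := fun s => G s + cc * (k+1) * (t₀ - s)^k)
    · apply ContinuousOn.sub
      · exact fun s hs => (hg s hs).continuousWithinAt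
      · exact (Continuous.mul continuous_const
          ((continuous_const.sub continuous_id).pow (k+1))).continuousOn
    · intro s hs
      rw [interior_Icc] at hs ⊢
      have := ((hg s (Set.mem_Icc.mpr ⟨le_of_lt hs.1, le_of_lt hs.2⟩)).mono
        (Set.Ioo_subset_Icc_self)).sub ((hFd s).hasDerivWithinAt)
      refine this.congr_deriv ?_
      ring
    · intro s hs
      rw [interior_Icc] at hs
      have := hG s hs
      linarith
  have h0 := hanti ht (Set.mem_Icc.mpr ⟨h, le_refl _⟩) ht.2
  simp only [hgt, sub_self] at h0
  have hz : (0:ℝ) ^ (k+1) = 0 := zero_pow (Nat.succ_ne_zero k)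
  rw [hz] at h0
  linarith

/-- Forward comparison: if `g t₀ = 0` and `g' ≥ c(k+1)(s-t₀)^k` after `t₀`,
then `g t ≥ c (t-t₀)^(k+1)` after `t₀`. -/
lemma grow_lower {t₀ t₁ : ℝ} (h : t₀ ≤ t₁) (g G : ℝ → ℝ) (k : ℕ) {cc : ℝ}
    (hg : ∀ s ∈ Set.Icc t₀ t₁, HasDerivWithinAt g (G s) (Set.Icc t₀ t₁) s)
    (hG : ∀ s ∈ Set.Ioo t₀ t₁, cc * (k+1) * (s - t₀)^k ≤ G s)
    (hgt : g t₀ = 0) :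
    ∀ t ∈ Set.Icc t₀ t₁, cc * (t - t₀)^(k+1) ≤ g t := by
  intro t ht
  have hFd : ∀ s : ℝ, HasDerivAt (fun u => cc * (u - t₀)^(k+1))
      (cc * (k+1) * (s - t₀)^k) s := by
    intro s
    have h1 : HasDerivAt (fun u : ℝ => u - t₀) 1 s := (hasDerivAt_id s).sub_const t₀
    have h2 := (h1.pow (k+1)).const_mul cc
    refine h2.congr_deriv ?_
    push_cast
    ring
  have hmono : MonotoneOn (fun s => g s - cc * (s - t₀)^(k+1)) (Set.Icc t₀ t₁) := by
    apply monotoneOn_of_hasDerivWithinAt_nonneg (convex_Icc t₀ t₁)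
      (f' := fun s => G s - cc * (k+1) * (s - t₀)^k)
    · apply ContinuousOn.sub
      · exact fun s hs => (hg s hs).continuousWithinAt
      · exact (Continuous.mul continuous_const
          ((continuous_id.sub continuous_const).pow (k+1))).continuousOn
    · intro s hs
      rw [interior_Icc] at hs ⊢
      exact ((hg s (Set.mem_Icc.mpr ⟨le_of_lt hs.1, le_of_lt hs.2⟩)).mono
        (Set.Ioo_subset_Icc_self)).sub ((hFd s).hasDerivWithinAt)
    · intro s hs
      rw [interior_Icc] at hs
      have := hG s hs
      linarith
  have h0 := hmono (Set.mem_Icc.mpr ⟨le_refl _, h⟩) ht ht.1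
  simp only [hgt, sub_self] at h0
  have hz : (0:ℝ) ^ (k+1) = 0 := zero_pow (Nat.succ_ne_zero k)
  rw [hz] at h0
  linarith

/-- Polynomial upper bounds inside a zero block. -/
lemma block_upper {T₀ T₁ C B : ℝ} {m n : ℤ} {a b c : ℤ → ℝ → ℝ} {w : ℝ → ℤ → ℝ} {t₀ : ℝ}
    (hC : 0 < C)
    (hts : t₀ ∈ Set.Icc T₀ T₁)
    (hode : ∀ j, m < j → j < n → ∀ t ∈ Set.Icc T₀ T₁, HasDerivWithinAt (fun s => w s j)
        (a j t * w t (j-1) + b j t * w t (j+1) + c j t * w t j) (Set.Icc T₀ T₁) t)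
    (hcb : ∀ j, m < j → j < n → ∀ t ∈ Set.Icc T₀ T₁,
        |a j t| ≤ C ∧ |b j t| ≤ C ∧ |c j t| ≤ C)
    (hz : ∀ j, m < j → j < n → w t₀ j = 0)
    (hB : 0 < B) (hBb : ∀ j, m ≤ j → j ≤ n → ∀ t ∈ Set.Icc T₀ T₁, |w t j| ≤ B)
    (r : ℕ) :
    ∃ A, 0 < A ∧ ∀ j, m ≤ j → j ≤ n → (r : ℤ) ≤ j - m → (r : ℤ) ≤ n - j →
      ∀ t ∈ Set.Icc T₀ T₁, |w t j| ≤ A * |t - t₀| ^ r := by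
  induction r with
  | zero =>
    exact ⟨B, hB, fun j hj1 hj2 _ _ t ht => by simpa using hBb j hj1 hj2 t ht⟩
  | succ r ih =>
    obtain ⟨A, hA, hAb⟩ := ih
    refine ⟨3*C*A, by positivity, ?_⟩
    intro j hj1 hj2 hjm hjn t ht
    have hmj : m < j := by omega
    have hjn' : j < n := by omega
    set S := Set.Icc (min t t₀) (max t t₀) with hS
    have hSsub : S ⊆ Set.Icc T₀ T₁ := by
      intro s hs
      simp only [hS, Set.mem_Icc] at hs ⊢
      rcases ht with ⟨ht1, ht2⟩
      rcases hts with ⟨hs1, hs2⟩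
      constructor
      · exact le_trans (le_min ht1 hs1) hs.1
      · exact le_trans hs.2 (max_le ht2 hs2)
    have htS : t ∈ S := Set.mem_Icc.mpr ⟨min_le_left _ _, le_max_left _ _⟩
    have ht0S : t₀ ∈ S := Set.mem_Icc.mpr ⟨min_le_right _ _, le_max_right _ _⟩
    have hdist : ∀ s ∈ S, |s - t₀| ≤ |t - t₀| := by
      intro s hs
      simp only [hS, Set.mem_Icc] at hs
      rcases le_total t t₀ with hc | hc
      · rw [min_eq_left hc, max_eq_right hc] at hs
        rw [abs_sub_le_iff]
        constructor <;> [skip; skip] <;>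
          · have := abs_sub_le_iff.mp (le_refl |t - t₀|)
            rcases abs_cases (t - t₀) with ⟨he, _⟩ | ⟨he, _⟩ <;> nlinarith [hs.1, hs.2]
      · rw [min_eq_right hc, max_eq_left hc] at hs
        rw [abs_sub_le_iff]
        constructor <;>
          · rcases abs_cases (t - t₀) with ⟨he, _⟩ | ⟨he, _⟩ <;> nlinarith [hs.1, hs.2]
    have key := Convex.norm_image_sub_le_of_norm_hasDerivWithin_le
      (f := fun s => w s j)
      (f' := fun s => a j s * w s (j-1) + b j s * w s (j+1) + c j s * w s j)
      (C := 3*C*(A * |t - t₀| ^ r))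
      (fun s hs => (hode j hmj hjn' s (hSsub hs)).mono hSsub)
      (fun s hs => ?_) (convex_Icc _ _) ht0S htS
    · simp only [Real.norm_eq_abs] at key
      rw [hz j hmj hjn', sub_zero] at key
      calc |w t j| ≤ 3*C*(A * |t - t₀| ^ r) * |t - t₀| := key
        _ = 3*C*A * |t - t₀| ^ (r+1) := by rw [pow_succ]; ring
    · have hsI := hSsub hs
      obtain ⟨ha, hb, hc'⟩ := hcb j hmj hjn' s hsI
      have h1 : |w s (j-1)| ≤ A * |t - t₀| ^ r := by
        calc |w s (j-1)| ≤ A * |s - t₀| ^ r :=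
              hAb (j-1) (by omega) (by omega) (by omega) (by omega) s hsI
          _ ≤ A * |t - t₀| ^ r := by
              apply mul_le_mul_of_nonneg_left _ (le_of_lt hA)
              exact pow_le_pow_left₀ (abs_nonneg _) (hdist s hs) r
      have h2 : |w s (j+1)| ≤ A * |t - t₀| ^ r := by
        calc |w s (j+1)| ≤ A * |s - t₀| ^ r :=
              hAb (j+1) (by omega) (by omega) (by omega) (by omega) s hsI
          _ ≤ A * |t - t₀| ^ r := by
              apply mul_le_mul_of_nonneg_left _ (le_of_lt hA)
              exact pow_le_pow_left₀ (abs_nonneg _) (hdist s hs) r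
      have h3 : |w s j| ≤ A * |t - t₀| ^ r := by
        calc |w s j| ≤ A * |s - t₀| ^ r :=
              hAb j (by omega) (by omega) (by omega) (by omega) s hsI
          _ ≤ A * |t - t₀| ^ r := by
              apply mul_le_mul_of_nonneg_left _ (le_of_lt hA)
              exact pow_le_pow_left₀ (abs_nonneg _) (hdist s hs) r
      rw [Real.norm_eq_abs]
      have e1 : |a j s * w s (j-1)| ≤ C * (A * |t - t₀| ^ r) := by
        rw [abs_mul]
        apply mul_le_mul ha h1 (abs_nonneg _) (le_of_lt hC)
      have e2 : |b j s * w s (j+1)| ≤ C * (A * |t - t₀| ^ r) := by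
        rw [abs_mul]
        apply mul_le_mul hb h2 (abs_nonneg _) (le_of_lt hC)
      have e3 : |c j s * w s j| ≤ C * (A * |t - t₀| ^ r) := by
        rw [abs_mul]
        apply mul_le_mul hc' h3 (abs_nonneg _) (le_of_lt hC)
      calc |a j s * w s (j-1) + b j s * w s (j+1) + c j s * w s j|
          ≤ |a j s * w s (j-1)| + |b j s * w s (j+1)| + |c j s * w s j| := abs_add_three _ _ _
        _ ≤ 3*C*(A * |t - t₀| ^ r) := by linarith

/-- Backward-in-time alternation of signs, propagating from the left boundary. -/
lemma block_alt_left {T₀ T₁ δ C B η ε₀ : ℝ} {m n : ℤ} {a b c : ℤ → ℝ → ℝ}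
    {w : ℝ → ℤ → ℝ} {t₀ σ : ℝ}
    (hδ : 0 < δ) (hC : 0 < C) (hη : 0 < η) (hε₀ : 0 < ε₀) (hB : 0 < B)
    (hts : t₀ ∈ Set.Icc T₀ T₁)
    (hode : ∀ j, m < j → j < n → ∀ t ∈ Set.Icc T₀ T₁, HasDerivWithinAt (fun s => w s j)
        (a j t * w t (j-1) + b j t * w t (j+1) + c j t * w t j) (Set.Icc T₀ T₁) t)
    (hcb : ∀ j, m < j → j < n → ∀ t ∈ Set.Icc T₀ T₁,
        |a j t| ≤ C ∧ |b j t| ≤ C ∧ |c j t| ≤ C)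
    (hpos : ∀ j, m < j → j < n → ∀ t ∈ Set.Icc T₀ T₁, δ ≤ a j t ∧ δ ≤ b j t)
    (hz : ∀ j, m < j → j < n → w t₀ j = 0)
    (hBb : ∀ j, m ≤ j → j ≤ n → ∀ t ∈ Set.Icc T₀ T₁, |w t j| ≤ B)
    (hσ : σ = 1 ∨ σ = -1)
    (hσw : ∀ t ∈ Set.Icc T₀ T₁, t₀ - ε₀ ≤ t → t ≤ t₀ → η ≤ σ * w t m) :
    ∀ k : ℕ, 2 * (k:ℤ) ≤ n - m - 1 →
    ∃ ε, 0 < ε ∧ ∃ cc, 0 < cc ∧ ∀ t ∈ Set.Icc T₀ T₁, t₀ - ε ≤ t → t ≤ t₀ →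
      cc * (t₀ - t)^k ≤ (-1:ℝ)^k * σ * w t (m + k) := by
  have hσ1 : |σ| = 1 := by rcases hσ with h | h <;> simp [h]
  intro k
  induction k with
  | zero =>
    intro _
    refine ⟨ε₀, hε₀, η, hη, fun t ht h1 h2 => ?_⟩
    simpa using hσw t ht h1 h2
  | succ k ih =>
    intro hk2
    obtain ⟨ε₁, hε₁, c₁, hc₁, hIH⟩ := ih (by omega)
    obtain ⟨A, hA, hAb⟩ := block_upper hC hts hode hcb hz hB hBb (k+1)
    set j : ℤ := m + k + 1 with hj
    have hmj : m < j := by omega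
    have hjn : j < n := by omega
    set ε₂ : ℝ := min ε₁ (min ε₀ (δ*c₁/(4*C*A))) with hε₂
    have hε₂pos : 0 < ε₂ := by
      apply lt_min hε₁ (lt_min hε₀ (by positivity))
    set cc : ℝ := δ*c₁/(2*(k+1)) with hcc
    have hccpos : 0 < cc := by positivity
    refine ⟨ε₂, hε₂pos, cc, hccpos, ?_⟩
    set t₁ : ℝ := max T₀ (t₀ - ε₂) with ht₁
    have ht₁le : t₁ ≤ t₀ := max_le hts.1 (by linarith)
    have hsub : Set.Icc t₁ t₀ ⊆ Set.Icc T₀ T₁ := by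
      intro s hs
      exact ⟨le_trans (le_max_left _ _) hs.1, le_trans hs.2 hts.2⟩
    have hconc := decay_lower ht₁le
      (fun s => (-1:ℝ)^(k+1) * σ * w s j)
      (fun s => (-1:ℝ)^(k+1) * σ *
        (a j s * w s (j-1) + b j s * w s (j+1) + c j s * w s j))
      k (cc := cc)
      (fun s hs => ((hode j hmj hjn s (hsub hs)).mono hsub).const_mul _)
      (fun s hs => ?_)
      (by show (-1:ℝ)^(k+1) * σ * w t₀ j = 0; rw [hz j hmj hjn]; ring)
    · intro t ht hta htb
      have htmem : t ∈ Set.Icc t₁ t₀ := ⟨max_le ht.1 hta, htb⟩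
      have hthis : cc * (t₀ - t)^(k+1) ≤ (-1:ℝ)^(k+1) * σ * w t j := hconc t htmem
      push_cast
      rw [show m + ((k:ℤ) + 1) = j by rw [hj]; ring]
      exact hthis
    · -- derivative bound
      have hsI : s ∈ Set.Icc T₀ T₁ := hsub (Set.Ioo_subset_Icc_self hs)
      have hs1 : t₀ - ε₂ ≤ s := le_trans (le_max_right _ _) (le_of_lt hs.1)
      have hs2 : s ≤ t₀ := le_of_lt hs.2
      have hspos : 0 ≤ t₀ - s := by linarith
      have hX : c₁ * (t₀ - s)^k ≤ (-1:ℝ)^k * σ * w s (j-1) := by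
        have := hIH s hsI (by have : ε₂ ≤ ε₁ := min_le_left _ _; linarith) hs2
        have hje : m + (k:ℤ) = j - 1 := by rw [hj]; ring
        rwa [hje] at this
      obtain ⟨hba, hbb, hbc⟩ := hcb j hmj hjn s hsI
      obtain ⟨hpa, hpb⟩ := hpos j hmj hjn s hsI
      have hXnn : 0 ≤ (-1:ℝ)^k * σ * w s (j-1) :=
        le_trans (by positivity) hX
      have heP : (-1:ℝ)^(k+1) * σ * (a j s * w s (j-1)) ≤ -(δ * (c₁ * (t₀ - s)^k)) := by
        have he : (-1:ℝ)^(k+1) * σ * (a j s * w s (j-1))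
            = -(a j s * ((-1:ℝ)^k * σ * w s (j-1))) := by rw [pow_succ]; ring
        rw [he]
        have h1 : δ * (c₁ * (t₀ - s)^k) ≤ a j s * ((-1:ℝ)^k * σ * w s (j-1)) :=
          mul_le_mul hpa hX (by positivity) (le_trans (le_of_lt hδ) hpa)
        linarith
      have habs : |(-1:ℝ)^(k+1) * σ| = 1 := by
        rw [abs_mul, abs_pow, abs_neg, abs_one, one_pow, one_mul, hσ1]
      have hsabs : |s - t₀| = t₀ - s := by
        rw [abs_sub_comm]; exact abs_of_nonneg hspos
      have hupQ : |w s (j+1)| ≤ A * (t₀ - s)^(k+1) := by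
        have := hAb (j+1) (by omega) (by omega) (by omega) (by omega) s hsI
        rwa [hsabs] at this
      have hupR : |w s j| ≤ A * (t₀ - s)^(k+1) := by
        have := hAb j (by omega) (by omega) (by omega) (by omega) s hsI
        rwa [hsabs] at this
      have heQ : (-1:ℝ)^(k+1) * σ * (b j s * w s (j+1)) ≤ C * (A * (t₀ - s)^(k+1)) := by
        calc (-1:ℝ)^(k+1) * σ * (b j s * w s (j+1))
            ≤ |(-1:ℝ)^(k+1) * σ * (b j s * w s (j+1))| := le_abs_self _
          _ = |b j s| * |w s (j+1)| := by rw [abs_mul, habs, one_mul, abs_mul]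
          _ ≤ C * (A * (t₀ - s)^(k+1)) :=
              mul_le_mul hbb hupQ (abs_nonneg _) (le_of_lt hC)
      have heR : (-1:ℝ)^(k+1) * σ * (c j s * w s j) ≤ C * (A * (t₀ - s)^(k+1)) := by
        calc (-1:ℝ)^(k+1) * σ * (c j s * w s j)
            ≤ |(-1:ℝ)^(k+1) * σ * (c j s * w s j)| := le_abs_self _
          _ = |c j s| * |w s j| := by rw [abs_mul, habs, one_mul, abs_mul]
          _ ≤ C * (A * (t₀ - s)^(k+1)) :=
              mul_le_mul hbc hupR (abs_nonneg _) (le_of_lt hC)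
      have hsplit : (-1:ℝ)^(k+1) * σ *
            (a j s * w s (j-1) + b j s * w s (j+1) + c j s * w s j)
          = (-1:ℝ)^(k+1) * σ * (a j s * w s (j-1))
            + (-1:ℝ)^(k+1) * σ * (b j s * w s (j+1))
            + (-1:ℝ)^(k+1) * σ * (c j s * w s j) := by ring
      show (-1:ℝ)^(k+1) * σ * (a j s * w s (j-1) + b j s * w s (j+1) + c j s * w s j)
          ≤ -(cc * ((k:ℝ)+1) * (t₀ - s)^k)
      rw [hsplit]
      have hccval : cc * ((k:ℝ)+1) = δ*c₁/2 := by
        rw [hcc]; field_simp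
      have hεbound : t₀ - s ≤ δ*c₁/(4*C*A) := by
        have h1 : ε₂ ≤ δ*c₁/(4*C*A) := le_trans (min_le_right _ _) (min_le_right _ _)
        linarith
      have hpk : (0:ℝ) ≤ (t₀ - s)^k := by positivity
      have hps : (t₀ - s)^(k+1) = (t₀ - s) * (t₀ - s)^k := by rw [pow_succ]; ring
      have hkey : 2 * (C * (A * (t₀ - s)^(k+1))) ≤ (δ*c₁/2) * (t₀ - s)^k := by
        rw [hps]
        have := mul_le_mul_of_nonneg_right hεbound
          (mul_nonneg (mul_nonneg (by linarith : (0:ℝ) ≤ 2*C) (le_of_lt hA)) hpk)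
        calc 2 * (C * (A * ((t₀ - s) * (t₀ - s)^k)))
            = (t₀ - s) * (2*C*A*(t₀ - s)^k) := by ring
          _ ≤ δ*c₁/(4*C*A) * (2*C*A*(t₀ - s)^k) := this
          _ = (δ*c₁/2) * (t₀ - s)^k := by field_simp; ring
      rw [show -(cc * ((k:ℝ)+1) * (t₀ - s)^k) = -((cc*((k:ℝ)+1)) * (t₀ - s)^k) by ring,
        hccval]
      linarith

lemma sign_persist {f : ℝ → ℝ} {s : Set ℝ} {t₀ : ℝ}
    (hf : ContinuousWithinAt f s t₀) (h : f t₀ ≠ 0) :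
    ∃ σ : ℝ, (σ = 1 ∨ σ = -1) ∧ ∃ ε, 0 < ε ∧
      ∀ t ∈ s, |t - t₀| ≤ ε → |f t₀|/2 ≤ σ * f t := by
  have h2 : 0 < |f t₀|/2 := by positivity
  obtain ⟨d, hd, hdd⟩ := Metric.continuousWithinAt_iff.mp hf (|f t₀|/2) h2
  refine ⟨if 0 < f t₀ then 1 else -1, by split <;> simp, d/2, by positivity, ?_⟩
  intro t hts htd
  have hdist : dist t t₀ < d := by
    rw [Real.dist_eq]; linarith
  have hft := hdd hts hdist
  rw [Real.dist_eq] at hft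
  rcases abs_cases (f t - f t₀) with ⟨he, _⟩ | ⟨he, _⟩ <;>
    rcases abs_cases (f t₀) with ⟨he', hsg⟩ | ⟨he', hsg⟩ <;>
    · split
      · linarith
      · push_neg at *; first | linarith | (exfalso; rcases lt_or_eq_of_le (by assumption : f t₀ ≤ 0) with hx | hx; · linarith; · exact h hx)

lemma coord_bound {T₀ T₁ : ℝ} {w : ℝ → ℤ → ℝ} {m n : ℤ}
    (hcont : ∀ j, m ≤ j → j ≤ n → ContinuousOn (fun t => w t j) (Set.Icc T₀ T₁)) :
    ∃ B, 0 < B ∧ ∀ j, m ≤ j → j ≤ n → ∀ t ∈ Set.Icc T₀ T₁, |w t j| ≤ B := by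
  classical
  have hex : ∀ j : ℤ, ∃ Bj : ℝ, (m ≤ j → j ≤ n → ∀ t ∈ Set.Icc T₀ T₁, |w t j| ≤ Bj) := by
    intro j
    by_cases hj : m ≤ j ∧ j ≤ n
    · obtain ⟨Bj, hBj⟩ := isCompact_Icc.exists_bound_of_continuousOn (hcont j hj.1 hj.2)
      exact ⟨Bj, fun _ _ t ht => by simpa using hBj t ht⟩
    · exact ⟨0, fun h1 h2 => absurd ⟨h1, h2⟩ hj⟩
  choose Bf hBf using hex
  obtain ⟨M, hM⟩ := ((Finset.Icc m n).image Bf).bddAbove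
  refine ⟨max M 1, by positivity, ?_⟩
  intro j hj1 hj2 t ht
  have : Bf j ≤ M := hM (Finset.mem_image_of_mem Bf (Finset.mem_Icc.mpr ⟨hj1, hj2⟩))
  exact le_trans (hBf j hj1 hj2 t ht) (le_trans this (le_max_left _ _))

lemma neg_one_pow_sq (k : ℕ) : ((-1:ℝ)^k)^2 = 1 := by
  rw [← pow_mul, mul_comm, pow_mul]
  norm_num

lemma pair_neg {σ x y : ℝ} (k : ℕ) (hσ : σ = 1 ∨ σ = -1)
    (hx : 0 < (-1:ℝ)^k * σ * x) (hy : 0 < (-1:ℝ)^(k+1) * σ * y) : x * y < 0 := by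
  have h1 : ((-1:ℝ)^k)^2 = 1 := neg_one_pow_sq k
  have h2 : σ^2 = 1 := by rcases hσ with h | h <;> rw [h] <;> norm_num
  have h3 : ((-1:ℝ)^k*σ*x) * ((-1:ℝ)^(k+1)*σ*y)
      = -(((-1:ℝ)^k)^2 * (σ^2 * (x*y))) := by rw [pow_succ]; ring
  have h4 := mul_pos hx hy
  rw [h3, h1, h2] at h4
  nlinarith [h4]

lemma sign_ne {σ x : ℝ} (k : ℕ) (hx : 0 < (-1:ℝ)^k * σ * x) : x ≠ 0 := by
  intro h
  rw [h, mul_zero] at hx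
  exact lt_irrefl 0 hx

set_option maxHeartbeats 1000000 in
lemma block_local {T₀ T₁ δ C : ℝ} {m n : ℤ} {a b c : ℤ → ℝ → ℝ} {w : ℝ → ℤ → ℝ} {t₀ : ℝ}
    (hδ : 0 < δ) (hC : 0 < C)
    (hts : t₀ ∈ Set.Icc T₀ T₁)
    (hcont : ∀ j, m ≤ j → j ≤ n → ContinuousOn (fun t => w t j) (Set.Icc T₀ T₁))
    (hode : ∀ j, m < j → j < n → ∀ t ∈ Set.Icc T₀ T₁, HasDerivWithinAt (fun s => w s j)
        (a j t * w t (j-1) + b j t * w t (j+1) + c j t * w t j) (Set.Icc T₀ T₁) t)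
    (hcb : ∀ j, m < j → j < n → ∀ t ∈ Set.Icc T₀ T₁,
        |a j t| ≤ C ∧ |b j t| ≤ C ∧ |c j t| ≤ C)
    (hpos : ∀ j, m < j → j < n → ∀ t ∈ Set.Icc T₀ T₁, δ ≤ a j t ∧ δ ≤ b j t)
    (hmn : m + 1 < n)
    (hm0 : w t₀ m ≠ 0) (hn0 : w t₀ n ≠ 0)
    (hz : ∀ j, m < j → j < n → w t₀ j = 0) :
    ∃ ε, 0 < ε ∧ ∀ t ∈ Set.Icc T₀ T₁, |t - t₀| ≤ ε →
      (t₀ < t → zCount (w t) m n ≤ zCount (w t₀) m n) ∧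
      (t < t₀ → zCount (w t₀) m n ≤ zCount (w t) m n) := by
  obtain ⟨B, hB, hBb⟩ := coord_bound hcont
  obtain ⟨σ, hσpm, εm, hεm, hσw⟩ :=
    sign_persist ((hcont m le_rfl (by omega)).continuousWithinAt hts) hm0
  obtain ⟨ρ, hρpm, εn, hεn, hρw⟩ :=
    sign_persist ((hcont n (by omega) le_rfl).continuousWithinAt hts) hn0
  set η : ℝ := min (|w t₀ m|/2) (|w t₀ n|/2) with hη
  have hm0' : |w t₀ m| > 0 := abs_pos.mpr hm0
  have hn0' : |w t₀ n| > 0 := abs_pos.mpr hn0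
  have hηpos : 0 < η := lt_min (by positivity) (by positivity)
  set ε₀ : ℝ := min εm εn with hε₀d
  have hε₀ : 0 < ε₀ := lt_min hεm hεn
  have hσw' : ∀ t ∈ Set.Icc T₀ T₁, |t - t₀| ≤ ε₀ → η ≤ σ * w t m := fun t ht h =>
    le_trans (min_le_left _ _) (hσw t ht (le_trans h (min_le_left _ _)))
  have hρw' : ∀ t ∈ Set.Icc T₀ T₁, |t - t₀| ≤ ε₀ → η ≤ ρ * w t n := fun t ht h =>
    le_trans (min_le_right _ _) (hρw t ht (le_trans h (min_le_right _ _)))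
  have hσsq : σ * σ = 1 := by rcases hσpm with h | h <;> rw [h] <;> norm_num
  have hρsq : ρ * ρ = 1 := by rcases hρpm with h | h <;> rw [h] <;> norm_num
  have zc0 : zCount (w t₀) m n = (n - m - 1).toNat := zCount_block (w t₀) hmn hm0 hz
  have hcast : (n - m).toNat - 1 = (n - m - 1).toNat := by omega
  -- uniform left alternation
  set K : ℕ := ((n - m - 1)/2).toNat with hKd
  have hLtot : ∀ k : ℕ, ∃ ε, 0 < ε ∧ ∃ cc, 0 < cc ∧ (2*(k:ℤ) ≤ n-m-1 →
      ∀ t ∈ Set.Icc T₀ T₁, t₀ - ε ≤ t → t ≤ t₀ →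
        cc * (t₀ - t)^k ≤ (-1:ℝ)^k * σ * w t (m + k)) := by
    intro k
    by_cases hk : 2*(k:ℤ) ≤ n-m-1
    · obtain ⟨ε, hε, cc, hcc, hb⟩ := block_alt_left hδ hC hηpos hε₀ hB hts hode hcb hpos hz
        hBb hσpm (fun t ht h1 h2 => hσw' t ht (by rw [abs_sub_comm]; rw [abs_of_nonneg (by linarith)]; linarith)) k hk
      exact ⟨ε, hε, cc, hcc, fun _ => hb⟩
    · exact ⟨1, one_pos, 1, one_pos, fun h => absurd h hk⟩
  choose εL hεL ccL hccL hbL using hLtot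
  -- uniform right alternation (by reflection)
  have hRtot : ∀ k : ℕ, ∃ ε, 0 < ε ∧ ∃ cc, 0 < cc ∧ (2*(k:ℤ) ≤ n-m-1 →
      ∀ t ∈ Set.Icc T₀ T₁, t₀ - ε ≤ t → t ≤ t₀ →
        cc * (t₀ - t)^k ≤ (-1:ℝ)^k * ρ * w t (n - k)) := by
    intro k
    by_cases hk : 2*(k:ℤ) ≤ n-m-1
    · obtain ⟨ε, hε, cc, hcc, hb⟩ := block_alt_left (w := fun t j => w t (m+n-j))
        (a := fun j t => b (m+n-j) t) (b := fun j t => a (m+n-j) t)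
        (c := fun j t => c (m+n-j) t) (m := m) (n := n) (σ := ρ)
        hδ hC hηpos hε₀ hB hts
        (fun j h1 h2 t ht => by
          have h := hode (m+n-j) (by omega) (by omega) t ht
          have e1 : m+n-j-1 = m+n-(j+1) := by ring
          have e2 : m+n-j+1 = m+n-(j-1) := by ring
          rw [e1, e2] at h
          show HasDerivWithinAt (fun s => w s (m+n-j)) _ _ t
          convert h using 1
          ring)
        (fun j h1 h2 t ht => by
          obtain ⟨h1', h2', h3'⟩ := hcb (m+n-j) (by omega) (by omega) t ht
          exact ⟨h2', h1', h3'⟩)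
        (fun j h1 h2 t ht => by
          obtain ⟨h1', h2'⟩ := hpos (m+n-j) (by omega) (by omega) t ht
          exact ⟨h2', h1'⟩)
        (fun j h1 h2 => hz (m+n-j) (by omega) (by omega))
        (fun j h1 h2 t ht => hBb (m+n-j) (by omega) (by omega) t ht)
        hρpm
        (fun t ht h1 h2 => by
          show η ≤ ρ * w t (m+n-m)
          rw [show m+n-m = n by ring]
          exact hρw' t ht (by rw [abs_sub_comm]; rw [abs_of_nonneg (by linarith)]; linarith))
        k hk
      refine ⟨ε, hε, cc, hcc, fun _ t ht h1 h2 => ?_⟩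
      have := hb t ht h1 h2
      show cc * (t₀ - t)^k ≤ (-1:ℝ)^k * ρ * w t (n - k)
      rw [show n - (k:ℤ) = m+n-(m+k) by ring]
      exact this
    · exact ⟨1, one_pos, 1, one_pos, fun h => absurd h hk⟩
  choose εR hεR ccR hccR hbR using hRtot
  have hne : (Finset.range (K+2)).Nonempty := ⟨0, by simp⟩
  set εA : ℝ := (Finset.range (K+2)).inf' hne (fun k => min (εL k) (εR k)) with hεAd
  have hεApos : 0 < εA := by
    rw [hεAd, Finset.lt_inf'_iff]
    exact fun k _ => lt_min (hεL k) (hεR k)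
  have hεAleL : ∀ k, k ≤ K + 1 → εA ≤ εL k := by
    intro k hk
    exact le_trans (Finset.inf'_le _ (Finset.mem_range.mpr (by omega))) (min_le_left _ _)
  have hεAleR : ∀ k, k ≤ K + 1 → εA ≤ εR k := by
    intro k hk
    exact le_trans (Finset.inf'_le _ (Finset.mem_range.mpr (by omega))) (min_le_right _ _)
  obtain ⟨A1, hA1, hA1b⟩ := block_upper hC hts hode hcb hz hB hBb 1
  -- Claim A
  obtain ⟨εF, hεF, hclaimA⟩ : ∃ ε, 0 < ε ∧ ∀ t ∈ Set.Icc T₀ T₁, |t - t₀| ≤ ε → t₀ < t →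
      zCount (w t) m n ≤ zCount (w t₀) m n := by
    by_cases hcase : 2 ≤ n - m - 1 ∨ σ = ρ
    · set εf : ℝ := min ε₀ (δ*η/(4*C*A1)) with hεfd
      have hεfpos : 0 < εf := lt_min hε₀ (by positivity)
      refine ⟨εf, hεfpos, ?_⟩
      intro t ht habs hlt
      set t₂ : ℝ := min T₁ (t₀ + εf) with ht₂d
      have ht₀₂ : t₀ ≤ t₂ := le_min hts.2 (by linarith)
      have hsub2 : Set.Icc t₀ t₂ ⊆ Set.Icc T₀ T₁ := fun s hs =>
        ⟨le_trans hts.1 hs.1, le_trans hs.2 (min_le_left _ _)⟩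
      have hGb : ∀ s ∈ Set.Ioo t₀ t₂, δ*η/2 ≤
          σ * (a (m+1) s * w s (m+1-1) + b (m+1) s * w s (m+1+1) + c (m+1) s * w s (m+1)) := by
        intro s hs
        have hsI : s ∈ Set.Icc T₀ T₁ := hsub2 (Set.Ioo_subset_Icc_self hs)
        have hs1 : t₀ < s := hs.1
        have hs2 : s ≤ t₀ + εf := le_trans (le_of_lt hs.2) (min_le_right _ _)
        have hsabs : |s - t₀| = s - t₀ := abs_of_nonneg (by linarith)
        have habs' : |s - t₀| ≤ ε₀ := by
          rw [hsabs]
          exact le_trans (by linarith) (min_le_left ε₀ (δ*η/(4*C*A1)))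
        have hσm : η ≤ σ * w s m := hσw' s hsI habs'
        obtain ⟨hba, hbb, hbc⟩ := hcb (m+1) (by omega) (by omega) s hsI
        obtain ⟨hpa, hpb⟩ := hpos (m+1) (by omega) (by omega) s hsI
        rw [show m+1-1 = m from by ring]
        have hterm1 : δ*η ≤ a (m+1) s * (σ * w s m) :=
          mul_le_mul hpa hσm (by linarith) (by linarith)
        have hup1 : |w s (m+1)| ≤ A1 * (s - t₀) := by
          have := hA1b (m+1) (by omega) (by omega) (by omega) (by omega) s hsI
          rwa [hsabs, pow_one] at this
        have habsσ : |σ| = 1 := by rcases hσpm with h|h <;> simp [h]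
        have hterm3 : -(C * (A1 * (s - t₀))) ≤ σ * (c (m+1) s * w s (m+1)) := by
          have h1 := neg_abs_le (σ * (c (m+1) s * w s (m+1)))
          have h2 : |σ * (c (m+1) s * w s (m+1))| = |c (m+1) s| * |w s (m+1)| := by
            rw [abs_mul, abs_mul, habsσ, one_mul]
          have h3 : |c (m+1) s| * |w s (m+1)| ≤ C * (A1 * (s - t₀)) :=
            mul_le_mul hbc hup1 (abs_nonneg _) (le_of_lt hC)
          rw [h2] at h1
          linarith
        have hterm2 : -(C * (A1 * (s - t₀))) ≤ σ * (b (m+1) s * w s (m+1+1)) := by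
          by_cases h2c : 2 ≤ n - m - 1
          · have hup2 : |w s (m+1+1)| ≤ A1 * (s - t₀) := by
              have := hA1b (m+2) (by omega) (by omega) (by omega) (by omega) s hsI
              rw [hsabs, pow_one] at this
              rwa [show m+1+1 = m+2 from by ring]
            have h1 := neg_abs_le (σ * (b (m+1) s * w s (m+1+1)))
            have h2 : |σ * (b (m+1) s * w s (m+1+1))| = |b (m+1) s| * |w s (m+1+1)| := by
              rw [abs_mul, abs_mul, habsσ, one_mul]
            have h3 : |b (m+1) s| * |w s (m+1+1)| ≤ C * (A1 * (s - t₀)) :=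
              mul_le_mul hbb hup2 (abs_nonneg _) (le_of_lt hC)
            rw [h2] at h1
            linarith
          · have hσρ : σ = ρ := by tauto
            have hnm2 : m+1+1 = n := by omega
            rw [hnm2]
            have hρn : η ≤ ρ * w s n := hρw' s hsI habs'
            have : δ*η ≤ b (m+1) s * (ρ * w s n) :=
              mul_le_mul hpb hρn (by linarith) (by linarith)
            have hpos' : 0 ≤ C * (A1 * (s - t₀)) := mul_nonneg (le_of_lt hC) (mul_nonneg (le_of_lt hA1) (by linarith))
            calc -(C * (A1 * (s - t₀))) ≤ 0 := by linarith
              _ ≤ σ * (b (m+1) s * w s n) := by rw [hσρ]; nlinarith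
        have hsmall : 2*(C * (A1 * (s - t₀))) ≤ δ*η/2 := by
          have hεf2 : s - t₀ ≤ δ*η/(4*C*A1) :=
            le_trans (by linarith) (min_le_right ε₀ (δ*η/(4*C*A1)))
          have := mul_le_mul_of_nonneg_left hεf2 (by positivity : (0:ℝ) ≤ 2*C*A1)
          calc 2*(C * (A1 * (s - t₀))) = 2*C*A1*(s-t₀) := by ring
            _ ≤ 2*C*A1*(δ*η/(4*C*A1)) := this
            _ = δ*η/2 := by field_simp; ring
        have hsplit : σ * (a (m+1) s * w s m + b (m+1) s * w s (m+1+1) + c (m+1) s * w s (m+1))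
            = a (m+1) s * (σ * w s m) + σ * (b (m+1) s * w s (m+1+1))
              + σ * (c (m+1) s * w s (m+1)) := by ring
        rw [hsplit]
        linarith
      have hgrow := grow_lower ht₀₂ (fun s => σ * w s (m+1))
        (fun s => σ * (a (m+1) s * w s (m+1-1) + b (m+1) s * w s (m+1+1) + c (m+1) s * w s (m+1)))
        0 (cc := δ*η/2)
        (fun s hs => ((hode (m+1) (by omega) (by omega) s (hsub2 hs)).mono hsub2).const_mul σ)
        (fun s hs => by simpa using hGb s hs)
        (by show σ * w t₀ (m+1) = 0; rw [hz (m+1) (by omega) (by omega)]; ring)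
      have htmem : t ∈ Set.Icc t₀ t₂ := by
        refine ⟨le_of_lt hlt, le_min ht.2 ?_⟩
        have : |t - t₀| = t - t₀ := abs_of_nonneg (by linarith)
        linarith [habs, this.symm.trans_le habs]
      have hposA : 0 < σ * w t (m+1) := by
        have h1 := hgrow t htmem
        have h2 : 0 < (δ*η/2) * (t - t₀)^(0+1) := by
          have : 0 < t - t₀ := by linarith
          positivity
        linarith
      have hσm : η ≤ σ * w t m := hσw' t ht (le_trans habs (min_le_left _ _))
      have hnz : ¬ zeroAt (w t) m := by
        rw [zeroAt_iff]
        push_neg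
        constructor
        · intro h0; rw [h0, mul_zero] at hσm; linarith
        · nlinarith [mul_pos (lt_of_lt_of_le hηpos hσm) hposA, hσsq]
      have hle := zCount_le_of_not (w t) (n := n) (le_refl m) (by omega) hnz
      rw [zc0, ← hcast]
      exact hle
    · push_neg at hcase
      obtain ⟨hc1, hc2⟩ := hcase
      have hnm : n = m + 2 := by omega
      have hσρ : σ = -ρ := by
        rcases hσpm with h|h <;> rcases hρpm with h'|h' <;> rw [h, h'] at hc2 ⊢ <;>
          (norm_num at hc2 <;> norm_num)
      refine ⟨ε₀, hε₀, ?_⟩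
      intro t ht habs _
      have hσm : η ≤ σ * w t m := hσw' t ht habs
      have hρn : η ≤ ρ * w t n := hρw' t ht habs
      by_cases hz1 : zeroAt (w t) m
      · have hprod : w t m * w t (m+1) < 0 := by
          rw [zeroAt_iff] at hz1
          rcases hz1 with h0 | h
          · exfalso; rw [h0, mul_zero] at hσm; linarith
          · exact h
        have hs1 : σ * w t (m+1) < 0 := by
          by_contra hge
          push_neg at hge
          have := mul_nonneg (le_trans (le_of_lt hηpos) hσm) hge
          nlinarith [hσsq, hprod]
        have hnz2 : ¬ zeroAt (w t) (m+1) := by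
          rw [zeroAt_iff]
          push_neg
          constructor
          · intro h0; rw [h0, mul_zero] at hs1; linarith
          · rw [show m+1+1 = n from by omega]
            have hσn : σ * w t n ≤ -η := by rw [hσρ]; linarith
            nlinarith [mul_pos_of_neg_of_neg hs1 (lt_of_le_of_lt hσn (by linarith : -η < 0)), hσsq]
        have hle := zCount_le_of_not (w t) (n := n) (by omega : m ≤ m+1) (by omega) hnz2
        rw [zc0, ← hcast]
        exact hle
      · have hle := zCount_le_of_not (w t) (n := n) (le_refl m) (by omega) hz1
        rw [zc0, ← hcast]
        exact hle
  -- Claim B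
  obtain ⟨εB, hεB, hclaimB⟩ : ∃ ε, 0 < ε ∧ ∀ t ∈ Set.Icc T₀ T₁, |t - t₀| ≤ ε → t < t₀ →
      zCount (w t₀) m n ≤ zCount (w t) m n := by
    have habs2le : ∀ t, |t - t₀| ≤ εA → t < t₀ → t₀ - εA ≤ t := by
      intro t h hlt
      rw [abs_sub_comm, abs_of_nonneg (by linarith)] at h
      linarith
    have hLs : ∀ (k:ℕ), 2*(k:ℤ) ≤ n-m-1 → ∀ t ∈ Set.Icc T₀ T₁, t₀ - εA ≤ t → t < t₀ →
        0 < (-1:ℝ)^k * σ * w t (m + k) := by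
      intro k hk t ht h1 h2
      have hkK : k ≤ K := by omega
      have hb := hbL k hk t ht (by linarith [hεAleL k (by omega)]) (le_of_lt h2)
      have : 0 < ccL k * (t₀ - t)^k := mul_pos (hccL k) (pow_pos (by linarith) k)
      linarith
    have hRs : ∀ (k:ℕ), 2*(k:ℤ) ≤ n-m-1 → ∀ t ∈ Set.Icc T₀ T₁, t₀ - εA ≤ t → t < t₀ →
        0 < (-1:ℝ)^k * ρ * w t (n - k) := by
      intro k hk t ht h1 h2
      have hkK : k ≤ K := by omega
      have hb := hbR k hk t ht (by linarith [hεAleR k (by omega)]) (le_of_lt h2)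
      have : 0 < ccR k * (t₀ - t)^k := mul_pos (hccR k) (pow_pos (by linarith) k)
      linarith
    rcases Int.even_or_odd (n-m-1) with ⟨q, hq⟩ | ⟨q, hq⟩
    · -- even block length
      have hq1 : 1 ≤ q := by omega
      refine ⟨εA, hεApos, ?_⟩
      intro t ht habs hlt
      have h1 : t₀ - εA ≤ t := habs2le t habs hlt
      have hsites : ∀ j, m ≤ j → j < n → j ≠ m + q → zeroAt (w t) j := by
        intro j hj1 hj2 hjne
        rw [zeroAt_iff]
        right
        by_cases hside : j - m < q
        · set k : ℕ := (j - m).toNat with hkd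
          have hk1 : (k:ℤ) = j - m := Int.toNat_of_nonneg (by omega)
          have F1 := hLs k (by omega) t ht h1 hlt
          have F2 := hLs (k+1) (by omega) t ht h1 hlt
          rw [show m + ((k:ℕ):ℤ) = j from by omega] at F1
          rw [show m + (((k+1:ℕ)):ℤ) = j + 1 from by push_cast; omega] at F2
          exact pair_neg k hσpm F1 F2
        · set k : ℕ := (n - j - 1).toNat with hkd
          have hk1 : (k:ℤ) = n - j - 1 := Int.toNat_of_nonneg (by omega)
          have F2 := hRs k (by omega) t ht h1 hlt
          have F1 := hRs (k+1) (by omega) t ht h1 hlt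
          rw [show n - ((k:ℕ):ℤ) = j + 1 from by omega] at F2
          rw [show n - (((k+1:ℕ)):ℤ) = j from by push_cast; omega] at F1
          have := pair_neg k hρpm F2 F1
          linarith [this, mul_comm (w t (j+1)) (w t j)]
      have hge := zCount_ge_of_all (w t) hsites
      rw [zc0]
      omega
    · -- odd block length
      have hq0 : 0 ≤ q := by omega
      set p : ℕ := q.toNat with hpd
      have hpq : (p:ℤ) = q := Int.toNat_of_nonneg hq0
      by_cases hσρ : σ = ρ
      · -- middle sign forced
        obtain ⟨A2, hA2, hA2b⟩ := block_upper hC hts hode hcb hz hB hBb (p+1)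
        obtain ⟨εM, hεMpos, ccM, hccM, hmid⟩ : ∃ εM, 0 < εM ∧ ∃ ccM, 0 < ccM ∧
            ∀ t ∈ Set.Icc T₀ T₁, t₀ - εM ≤ t → t ≤ t₀ →
              ccM * (t₀ - t)^(p+1) ≤ (-1:ℝ)^(p+1) * σ * w t (m+q+1) := by
          set εM : ℝ := min (min (εL p) (εR p)) (min ε₀ (δ*(ccL p)/(2*C*A2))) with hεMd
          have hεMpos : 0 < εM := by
            apply lt_min (lt_min (hεL p) (hεR p)) (lt_min hε₀ _)
            have := hccL p
            positivity
          set ccM : ℝ := δ*(ccL p)/(2*(p+1)) with hccMd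
          have hccMpos : 0 < ccM := by
            have := hccL p
            positivity
          have hεM1 : εM ≤ εL p := le_trans (min_le_left _ _) (min_le_left _ _)
          have hεM2 : εM ≤ εR p := le_trans (min_le_left _ _) (min_le_right _ _)
          have hεM4 : εM ≤ δ*(ccL p)/(2*C*A2) := le_trans (min_le_right _ _) (min_le_right _ _)
          refine ⟨εM, hεMpos, ccM, hccMpos, ?_⟩
          set t₁ : ℝ := max T₀ (t₀ - εM) with ht₁d
          have ht₁le : t₁ ≤ t₀ := max_le hts.1 (by linarith)
          have hsub : Set.Icc t₁ t₀ ⊆ Set.Icc T₀ T₁ := fun s hs =>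
            ⟨le_trans (le_max_left _ _) hs.1, le_trans hs.2 hts.2⟩
          have hmj : m < m+q+1 := by omega
          have hjn : m+q+1 < n := by omega
          have hconc := decay_lower ht₁le
            (fun s => (-1:ℝ)^(p+1) * σ * w s (m+q+1))
            (fun s => (-1:ℝ)^(p+1) * σ * (a (m+q+1) s * w s (m+q+1-1)
              + b (m+q+1) s * w s (m+q+1+1) + c (m+q+1) s * w s (m+q+1)))
            p (cc := ccM)
            (fun s hs => ((hode (m+q+1) hmj hjn s (hsub hs)).mono hsub).const_mul _)
            (fun s hs => ?_)
            (by show (-1:ℝ)^(p+1) * σ * w t₀ (m+q+1) = 0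
                rw [hz (m+q+1) hmj hjn]; ring)
          · intro t ht hta htb
            have htmem : t ∈ Set.Icc t₁ t₀ := ⟨max_le ht.1 hta, htb⟩
            exact hconc t htmem
          · have hsI : s ∈ Set.Icc T₀ T₁ := hsub (Set.Ioo_subset_Icc_self hs)
            have hs1 : t₀ - εM ≤ s := le_trans (le_max_right _ _) (le_of_lt hs.1)
            have hs2 : s ≤ t₀ := le_of_lt hs.2
            have hspos : 0 ≤ t₀ - s := by linarith
            have hsabs : |s - t₀| = t₀ - s := by
              rw [abs_sub_comm]; exact abs_of_nonneg hspos
            have hXL : ccL p * (t₀ - s)^p ≤ (-1:ℝ)^p * σ * w s (m+q) := by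
              have := hbL p (by omega) s hsI (by linarith) hs2
              rwa [show m + ((p:ℕ):ℤ) = m+q from by omega] at this
            have hXR : ccR p * (t₀ - s)^p ≤ (-1:ℝ)^p * ρ * w s (m+q+2) := by
              have := hbR p (by omega) s hsI (by linarith) hs2
              rwa [show n - ((p:ℕ):ℤ) = m+q+2 from by omega] at this
            obtain ⟨hba, hbb, hbc⟩ := hcb (m+q+1) hmj hjn s hsI
            obtain ⟨hpa, hpb⟩ := hpos (m+q+1) hmj hjn s hsI
            have hup : |w s (m+q+1)| ≤ A2 * (t₀ - s)^(p+1) := by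
              have := hA2b (m+q+1) (by omega) (by omega) (by omega) (by omega) s hsI
              rwa [hsabs] at this
            show (-1:ℝ)^(p+1) * σ * (a (m+q+1) s * w s (m+q+1-1)
              + b (m+q+1) s * w s (m+q+1+1) + c (m+q+1) s * w s (m+q+1))
              ≤ -(ccM * ((p:ℝ)+1) * (t₀ - s)^p)
            have hccLpnn : (0:ℝ) ≤ ccL p * (t₀ - s)^p :=
              mul_nonneg (le_of_lt (hccL p)) (pow_nonneg hspos p)
            have hccRpnn : (0:ℝ) ≤ ccR p * (t₀ - s)^p :=
              mul_nonneg (le_of_lt (hccR p)) (pow_nonneg hspos p)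
            have hXLnn : 0 ≤ (-1:ℝ)^p * σ * w s (m+q) := le_trans hccLpnn hXL
            have hXRnn : 0 ≤ (-1:ℝ)^p * ρ * w s (m+q+2) := le_trans hccRpnn hXR
            have heP : (-1:ℝ)^(p+1) * σ * (a (m+q+1) s * w s (m+q+1-1))
                ≤ -(δ * (ccL p * (t₀ - s)^p)) := by
              rw [show m+q+1-1 = m+q from by ring]
              have he : (-1:ℝ)^(p+1) * σ * (a (m+q+1) s * w s (m+q))
                  = -(a (m+q+1) s * ((-1:ℝ)^p * σ * w s (m+q))) := by rw [pow_succ]; ring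
              rw [he]
              have h1 : δ * (ccL p * (t₀ - s)^p) ≤ a (m+q+1) s * ((-1:ℝ)^p * σ * w s (m+q)) :=
                mul_le_mul hpa hXL hccLpnn (le_trans (le_of_lt hδ) hpa)
              linarith
            have heQ : (-1:ℝ)^(p+1) * σ * (b (m+q+1) s * w s (m+q+1+1)) ≤ 0 := by
              rw [show m+q+1+1 = m+q+2 from by ring]
              have he : (-1:ℝ)^(p+1) * σ * (b (m+q+1) s * w s (m+q+2))
                  = -(b (m+q+1) s * ((-1:ℝ)^p * ρ * w s (m+q+2))) := by
                rw [hσρ, pow_succ]; ring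
              rw [he]
              have : 0 ≤ b (m+q+1) s * ((-1:ℝ)^p * ρ * w s (m+q+2)) :=
                mul_nonneg (le_trans (le_of_lt hδ) hpb) hXRnn
              linarith
            have habse : |(-1:ℝ)^(p+1) * σ| = 1 := by
              rw [abs_mul, abs_pow, abs_neg, abs_one, one_pow, one_mul]
              rcases hσpm with h|h <;> simp [h]
            have heR : (-1:ℝ)^(p+1) * σ * (c (m+q+1) s * w s (m+q+1))
                ≤ C * (A2 * (t₀ - s)^(p+1)) := by
              calc (-1:ℝ)^(p+1) * σ * (c (m+q+1) s * w s (m+q+1))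
                  ≤ |(-1:ℝ)^(p+1) * σ * (c (m+q+1) s * w s (m+q+1))| := le_abs_self _
                _ = |c (m+q+1) s| * |w s (m+q+1)| := by
                    rw [abs_mul, habse, one_mul, abs_mul]
                _ ≤ C * (A2 * (t₀ - s)^(p+1)) :=
                    mul_le_mul hbc hup (abs_nonneg _) (le_of_lt hC)
            have hccval : ccM * ((p:ℝ)+1) = δ*(ccL p)/2 := by
              rw [hccMd]; field_simp
            have hεbound : t₀ - s ≤ δ*(ccL p)/(2*C*A2) := by
              have h1 : εM ≤ δ*(ccL p)/(2*C*A2) :=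
                le_trans (min_le_right _ _) (min_le_right _ _)
              linarith
            have hpk : (0:ℝ) ≤ (t₀ - s)^p := by positivity
            have hkey : C * (A2 * (t₀ - s)^(p+1)) ≤ (δ*(ccL p)/2) * (t₀ - s)^p := by
              have hmul := mul_le_mul_of_nonneg_right hεbound
                (mul_nonneg (mul_nonneg (le_of_lt hC) (le_of_lt hA2)) hpk)
              calc C * (A2 * (t₀ - s)^(p+1))
                  = (t₀ - s) * (C*A2*(t₀ - s)^p) := by rw [pow_succ]; ring
                _ ≤ δ*(ccL p)/(2*C*A2) * (C*A2*(t₀ - s)^p) := hmul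
                _ = (δ*(ccL p)/2) * (t₀ - s)^p := by field_simp
            have hsplit : (-1:ℝ)^(p+1) * σ * (a (m+q+1) s * w s (m+q+1-1)
                + b (m+q+1) s * w s (m+q+1+1) + c (m+q+1) s * w s (m+q+1))
                = (-1:ℝ)^(p+1) * σ * (a (m+q+1) s * w s (m+q+1-1))
                  + (-1:ℝ)^(p+1) * σ * (b (m+q+1) s * w s (m+q+1+1))
                  + (-1:ℝ)^(p+1) * σ * (c (m+q+1) s * w s (m+q+1)) := by ring
            rw [hsplit, show -(ccM * ((p:ℝ)+1) * (t₀ - s)^p)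
              = -((ccM * ((p:ℝ)+1)) * (t₀ - s)^p) from by ring, hccval]
            linarith
        refine ⟨min εA εM, lt_min hεApos hεMpos, ?_⟩
        intro t ht habs hlt
        have h1 : t₀ - εA ≤ t := habs2le t (le_trans habs (min_le_left _ _)) hlt
        have h1M : t₀ - εM ≤ t := by
          have := le_trans habs (min_le_right εA εM)
          rw [abs_sub_comm, abs_of_nonneg (by linarith)] at this
          linarith
        have hLx : ∀ k:ℕ, k ≤ p+1 → 0 < (-1:ℝ)^k * σ * w t (m + k) := by
          intro k hk
          by_cases hkp : k ≤ p
          · exact hLs k (by omega) t ht h1 hlt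
          · have hke : k = p+1 := by omega
            subst hke
            have h2 := hmid t ht h1M (le_of_lt hlt)
            have h3 : 0 < ccM * (t₀ - t)^(p+1) :=
              mul_pos hccM (pow_pos (by linarith) _)
            have he : m + (((p+1:ℕ)):ℤ) = m+q+1 := by push_cast; omega
            rw [he]
            linarith
        have hsites : ∀ j, m ≤ j → j < n → j ≠ m + q + 1 → zeroAt (w t) j := by
          intro j hj1 hj2 hjne
          rw [zeroAt_iff]
          right
          by_cases hside : j - m ≤ q
          · set k : ℕ := (j - m).toNat with hkd
            have hk1 : (k:ℤ) = j - m := Int.toNat_of_nonneg (by omega)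
            have F1 := hLx k (by omega)
            have F2 := hLx (k+1) (by omega)
            rw [show m + ((k:ℕ):ℤ) = j from by omega] at F1
            rw [show m + (((k+1:ℕ)):ℤ) = j + 1 from by push_cast; omega] at F2
            exact pair_neg k hσpm F1 F2
          · set k : ℕ := (n - j - 1).toNat with hkd
            have hk1 : (k:ℤ) = n - j - 1 := Int.toNat_of_nonneg (by omega)
            have F2 := hRs k (by omega) t ht h1 hlt
            have F1 := hRs (k+1) (by omega) t ht h1 hlt
            rw [show n - ((k:ℕ):ℤ) = j + 1 from by omega] at F2
            rw [show n - (((k+1:ℕ)):ℤ) = j from by push_cast; omega] at F1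
            have := pair_neg k hρpm F2 F1
            linarith [this, mul_comm (w t (j+1)) (w t j)]
        have hge := zCount_ge_of_all (w t) hsites
        rw [zc0]
        omega
      · -- σ = -ρ
        have hσρ' : σ = -ρ := by
          rcases hσpm with h|h <;> rcases hρpm with h'|h' <;> rw [h, h'] at hσρ ⊢ <;>
            (norm_num at hσρ <;> norm_num)
        refine ⟨εA, hεApos, ?_⟩
        intro t ht habs hlt
        have h1 : t₀ - εA ≤ t := habs2le t habs hlt
        have hleftpair : ∀ j, m ≤ j → j - m < q → w t j * w t (j+1) < 0 := by
          intro j hj1 hside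
          set k : ℕ := (j - m).toNat with hkd
          have hk1 : (k:ℤ) = j - m := Int.toNat_of_nonneg (by omega)
          have F1 := hLs k (by omega) t ht h1 hlt
          have F2 := hLs (k+1) (by omega) t ht h1 hlt
          rw [show m + ((k:ℕ):ℤ) = j from by omega] at F1
          rw [show m + (((k+1:ℕ)):ℤ) = j + 1 from by push_cast; omega] at F2
          exact pair_neg k hσpm F1 F2
        have hrightpair : ∀ j, q < j - m - 1 → j < n → w t j * w t (j+1) < 0 := by
          intro j hside hj2
          set k : ℕ := (n - j - 1).toNat with hkd
          have hk1 : (k:ℤ) = n - j - 1 := Int.toNat_of_nonneg (by omega)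
          have F2 := hRs k (by omega) t ht h1 hlt
          have F1 := hRs (k+1) (by omega) t ht h1 hlt
          rw [show n - ((k:ℕ):ℤ) = j + 1 from by omega] at F2
          rw [show n - (((k+1:ℕ)):ℤ) = j from by push_cast; omega] at F1
          have := pair_neg k hρpm F2 F1
          linarith [this, mul_comm (w t (j+1)) (w t j)]
        have hmq : 0 < (-1:ℝ)^p * σ * w t (m+q) := by
          have := hLs p (by omega) t ht h1 hlt
          rwa [show m + ((p:ℕ):ℤ) = m+q from by omega] at this
        have hnq : 0 < (-1:ℝ)^p * ρ * w t (m+q+2) := by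
          have := hRs p (by omega) t ht h1 hlt
          rwa [show n - ((p:ℕ):ℤ) = m+q+2 from by omega] at this
        rcases lt_trichotomy ((-1:ℝ)^p * σ * w t (m+q+1)) 0 with hmids | hmids | hmids
        · -- defect at m+q+1
          have hsites : ∀ j, m ≤ j → j < n → j ≠ m + q + 1 → zeroAt (w t) j := by
            intro j hj1 hj2 hjne
            rw [zeroAt_iff]
            by_cases hj : j = m + q
            · right
              subst hj
              have F2 : 0 < (-1:ℝ)^(p+1) * σ * w t (m+q+1) := by
                have he : (-1:ℝ)^(p+1) * σ * w t (m+q+1)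
                    = -((-1:ℝ)^p * σ * w t (m+q+1)) := by rw [pow_succ]; ring
                rw [he]; linarith
              have := pair_neg p hσpm hmq (by rwa [show m+q+1 = m+q+1 from rfl] at F2)
              rwa [show m+q+1 = m+q+1 from rfl] at this
            · right
              rcases lt_or_ge (j - m) q with hs | hs
              · exact hleftpair j hj1 hs
              · exact hrightpair j (by omega) hj2
          have hge := zCount_ge_of_all (w t) hsites
          rw [zc0]
          omega
        · -- middle exactly zero, defect at m+q
          have hmz : w t (m+q+1) = 0 := by
            rcases mul_eq_zero.mp hmids with h | h
            · exfalso
              rcases hσpm with h'|h' <;> rw [h'] at h <;> simp at h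
            · exact h
          have hsites : ∀ j, m ≤ j → j < n → j ≠ m + q → zeroAt (w t) j := by
            intro j hj1 hj2 hjne
            rw [zeroAt_iff]
            by_cases hj : j = m + q + 1
            · left; rw [hj]; exact hmz
            · right
              rcases lt_or_ge (j - m) q with hs | hs
              · exact hleftpair j hj1 hs
              · exact hrightpair j (by omega) hj2
          have hge := zCount_ge_of_all (w t) hsites
          rw [zc0]
          omega
        · -- middle positive, defect at m+q
          have hsites : ∀ j, m ≤ j → j < n → j ≠ m + q → zeroAt (w t) j := by
            intro j hj1 hj2 hjne
            rw [zeroAt_iff]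
            by_cases hj : j = m + q + 1
            · right
              subst hj
              have F2 : 0 < (-1:ℝ)^(p+1) * σ * w t (m+q+1+1) := by
                have he : (-1:ℝ)^(p+1) * σ * w t (m+q+1+1)
                    = (-1:ℝ)^p * ρ * w t (m+q+2) := by
                  rw [hσρ', pow_succ, show m+q+1+1 = m+q+2 from by ring]; ring
                rw [he]; exact hnq
              exact pair_neg p hσpm hmids F2
            · right
              rcases lt_or_ge (j - m) q with hs | hs
              · exact hleftpair j hj1 hs
              · exact hrightpair j (by omega) hj2
          have hge := zCount_ge_of_all (w t) hsites
          rw [zc0]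
          omega
  exact ⟨min εF εB, lt_min hεF hεB, fun t ht h =>
    ⟨hclaimA t ht (le_trans h (min_le_left _ _)),
     hclaimB t ht (le_trans h (min_le_right _ _))⟩⟩

open scoped Classical in
lemma zCount_congr {w w' : ℤ → ℝ} {m n : ℤ}
    (h : ∀ j, m ≤ j → j < n → (zeroAt w j ↔ zeroAt w' j)) : zCount w m n = zCount w' m n := by
  rw [zCount_eq, zCount_eq]
  congr 1
  apply Finset.filter_congr
  intro j hj
  rw [Finset.mem_Ico] at hj
  simp only [h j hj.1 hj.2]

lemma local_mono {T₀ T₁ δ C : ℝ} {a b c : ℤ → ℝ → ℝ} {w : ℝ → ℤ → ℝ}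
    (hδ : 0 < δ) (hC : 0 < C)
    (hsol : ∀ j : ℤ, ∀ t ∈ Set.Icc T₀ T₁, HasDerivWithinAt (fun s => w s j)
        (a j t * w t (j - 1) + b j t * w t (j + 1) + c j t * w t j) (Set.Icc T₀ T₁) t)
    (hcb : ∀ j : ℤ, ∀ t ∈ Set.Icc T₀ T₁, |a j t| ≤ C ∧ |b j t| ≤ C ∧ |c j t| ≤ C)
    (hpos : ∀ j : ℤ, ∀ t ∈ Set.Icc T₀ T₁, δ ≤ a j t ∧ δ ≤ b j t) :
    ∀ (N : ℕ) (m n : ℤ), (n - m).toNat ≤ N → m < n →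
      ∀ t₀ ∈ Set.Icc T₀ T₁, w t₀ m ≠ 0 → w t₀ n ≠ 0 →
      ∃ ε, 0 < ε ∧ ∀ t ∈ Set.Icc T₀ T₁, |t - t₀| ≤ ε →
        (t₀ < t → zCount (w t) m n ≤ zCount (w t₀) m n) ∧
        (t < t₀ → zCount (w t₀) m n ≤ zCount (w t) m n) := by
  intro N
  induction N with
  | zero =>
    intro m n h hmn
    exact absurd h (by omega)
  | succ N ih =>
    intro m n hN hmn t₀ ht₀ hm0 hn0
    have hcont : ∀ j : ℤ, ContinuousOn (fun t => w t j) (Set.Icc T₀ T₁) :=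
      fun j t ht => (hsol j t ht).continuousWithinAt
    by_cases hex : ∃ k, m < k ∧ k < n ∧ w t₀ k ≠ 0
    · obtain ⟨k, hk1, hk2, hk0⟩ := hex
      obtain ⟨ε₁, hε₁, h1⟩ := ih m k (by omega) hk1 t₀ ht₀ hm0 hk0
      obtain ⟨ε₂, hε₂, h2⟩ := ih k n (by omega) hk2 t₀ ht₀ hk0 hn0
      refine ⟨min ε₁ ε₂, lt_min hε₁ hε₂, fun t ht habs => ?_⟩
      have ha1 := h1 t ht (le_trans habs (min_le_left _ _))
      have ha2 := h2 t ht (le_trans habs (min_le_right _ _))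
      constructor
      · intro hlt
        rw [zCount_split (w t) (le_of_lt hk1) (le_of_lt hk2),
            zCount_split (w t₀) (le_of_lt hk1) (le_of_lt hk2)]
        exact Nat.add_le_add (ha1.1 hlt) (ha2.1 hlt)
      · intro hlt
        rw [zCount_split (w t) (le_of_lt hk1) (le_of_lt hk2),
            zCount_split (w t₀) (le_of_lt hk1) (le_of_lt hk2)]
        exact Nat.add_le_add (ha1.2 hlt) (ha2.2 hlt)
    · push_neg at hex
      by_cases hn1 : n = m + 1
      · subst hn1
        obtain ⟨σ, hσpm, εm, hεm, hσw⟩ :=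
          sign_persist ((hcont m).continuousWithinAt ht₀) hm0
        obtain ⟨ρ, hρpm, εn, hεn, hρw⟩ :=
          sign_persist ((hcont (m+1)).continuousWithinAt ht₀) hn0
        have hm0' : 0 < |w t₀ m| := abs_pos.mpr hm0
        have hn0' : 0 < |w t₀ (m+1)| := abs_pos.mpr hn0
        refine ⟨min εm εn, lt_min hεm hεn, fun t ht habs => ?_⟩
        have key : ∀ u ∈ Set.Icc T₀ T₁, |u - t₀| ≤ min εm εn →
            (zeroAt (w u) m ↔ σ * ρ < 0) := by
          intro u hu hab
          have hσu : |w t₀ m|/2 ≤ σ * w u m := hσw u hu (le_trans hab (min_le_left _ _))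
          have hρu : |w t₀ (m+1)|/2 ≤ ρ * w u (m+1) := hρw u hu (le_trans hab (min_le_right _ _))
          have hm' : 0 < σ * w u m := lt_of_lt_of_le (by positivity) hσu
          have hn' : 0 < ρ * w u (m+1) := lt_of_lt_of_le (by positivity) hρu
          rw [zeroAt_iff]
          constructor
          · rintro (h0 | h)
            · exfalso; rw [h0, mul_zero] at hm'; exact lt_irrefl 0 hm'
            · nlinarith [mul_pos hm' hn']
          · intro hneg
            right
            nlinarith [mul_pos hm' hn']
        have h1 := key t ht habs
        have h2 := key t₀ ht₀ (by rw [sub_self, abs_zero]; exact le_of_lt (lt_min hεm hεn))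
        have heq : zCount (w t) m (m+1) = zCount (w t₀) m (m+1) := by
          apply zCount_congr
          intro j hj1 hj2
          have : j = m := by omega
          subst this
          exact h1.trans h2.symm
        exact ⟨fun _ => le_of_eq heq, fun _ => le_of_eq heq.symm⟩
      · have hmn2 : m + 1 < n := by omega
        exact block_local hδ hC ht₀ (fun j _ _ => hcont j)
          (fun j _ _ t ht => hsol j t ht) (fun j _ _ t ht => hcb j t ht)
          (fun j _ _ t ht => hpos j t ht) hmn2 hm0 hn0 (fun j hj1 hj2 => hex j hj1 hj2)

theorem zCount_antitone
    (T₀ T₁ δ : ℝ) (hT : T₀ < T₁) (hδ : 0 < δ)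
    (a b c : ℤ → ℝ → ℝ) (w : ℝ → ℤ → ℝ)
    (hacont : ∀ j : ℤ, ContinuousOn (a j) (Set.Icc T₀ T₁))
    (hbcont : ∀ j : ℤ, ContinuousOn (b j) (Set.Icc T₀ T₁))
    (hccont : ∀ j : ℤ, ContinuousOn (c j) (Set.Icc T₀ T₁))
    (hbound : ∃ C : ℝ, ∀ j : ℤ, ∀ t ∈ Set.Icc T₀ T₁,
      |a j t| ≤ C ∧ |b j t| ≤ C ∧ |c j t| ≤ C)
    (hpos : ∀ j : ℤ, ∀ t ∈ Set.Icc T₀ T₁, δ ≤ a j t ∧ δ ≤ b j t)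
    (hsol : ∀ j : ℤ, ∀ t ∈ Set.Icc T₀ T₁,
      HasDerivWithinAt (fun s => w s j)
        (a j t * w t (j - 1) + b j t * w t (j + 1) + c j t * w t j) (Set.Icc T₀ T₁) t)
    (hsub : ∀ t ∈ Set.Icc T₀ T₁, SubExp (w t))
    (m n : ℤ) (hmn : m < n)
    (hm : ∀ t ∈ Set.Icc T₀ T₁, w t m ≠ 0)
    (hn : ∀ t ∈ Set.Icc T₀ T₁, w t n ≠ 0) :
    ∀ s ∈ Set.Icc T₀ T₁, ∀ t ∈ Set.Icc T₀ T₁, s ≤ t →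
      zCount (w t) m n ≤ zCount (w s) m n := by
  obtain ⟨C, hCb⟩ := hbound
  have hT₀I : T₀ ∈ Set.Icc T₀ T₁ := ⟨le_refl _, le_of_lt hT⟩
  have hC : 0 < C :=
    lt_of_lt_of_le hδ (le_trans (le_trans (hpos m T₀ hT₀I).1 (le_abs_self _)) (hCb m T₀ hT₀I).1)
  intro s hs t ht hst
  set A : Set ℝ := {r | r ∈ Set.Icc s T₁ ∧
    ∀ u ∈ Set.Icc s r, zCount (w u) m n ≤ zCount (w s) m n} with hA
  have hsA : s ∈ A := ⟨⟨le_refl s, hs.2⟩, fun u hu => by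
    have : u = s := le_antisymm hu.2 hu.1
    rw [this]⟩
  have hbdd : BddAbove A := ⟨T₁, fun r hr => hr.1.2⟩
  have hAne : A.Nonempty := ⟨s, hsA⟩
  set r₀ := sSup A with hr₀d
  have hsr : s ≤ r₀ := le_csSup hbdd hsA
  have hrT : r₀ ≤ T₁ := csSup_le hAne (fun r hr => hr.1.2)
  have hr₀I : r₀ ∈ Set.Icc T₀ T₁ := ⟨le_trans hs.1 hsr, hrT⟩
  obtain ⟨ε, hε, hloc⟩ := local_mono hδ hC hsol hCb hpos ((n-m).toNat) m n (le_refl _)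
    hmn r₀ hr₀I (hm r₀ hr₀I) (hn r₀ hr₀I)
  have hinA : ∀ u, s ≤ u → u < r₀ → zCount (w u) m n ≤ zCount (w s) m n := by
    intro u hsu hur
    obtain ⟨v, hvA, hv⟩ := exists_lt_of_lt_csSup hAne hur
    exact hvA.2 u ⟨hsu, le_of_lt hv⟩
  have hr₀A : ∀ u ∈ Set.Icc s r₀, zCount (w u) m n ≤ zCount (w s) m n := by
    intro u hu
    rcases lt_or_eq_of_le hu.2 with hlt' | heq
    · exact hinA u hu.1 hlt'
    · rcases eq_or_lt_of_le hsr with hsr' | hsr'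
      · rw [heq, ← hsr']
      · have hx : max s (r₀ - ε) < r₀ := max_lt hsr' (by linarith)
        obtain ⟨v, hvA, hv⟩ := exists_lt_of_lt_csSup hAne hx
        have hvr : v ≤ r₀ := le_csSup hbdd hvA
        rcases lt_or_eq_of_le hvr with hvlt | hveq
        · have hvI : v ∈ Set.Icc T₀ T₁ :=
            ⟨le_trans hs.1 (le_trans (le_max_left _ _) (le_of_lt hv)), hvA.1.2⟩
          have habs : |v - r₀| ≤ ε := by
            rw [abs_sub_comm, abs_of_nonneg (by linarith)]
            have := le_max_right s (r₀ - ε)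
            linarith
          have h1 : zCount (w r₀) m n ≤ zCount (w v) m n := (hloc v hvI habs).2 hvlt
          have h2 : zCount (w v) m n ≤ zCount (w s) m n :=
            hvA.2 v ⟨le_trans (le_max_left _ _) (le_of_lt hv), le_refl _⟩
          rw [heq]
          exact le_trans h1 h2
        · rw [heq]
          exact (hveq ▸ hvA.2) r₀ ⟨hsr, le_refl _⟩
  by_cases htr : t ≤ r₀
  · exact hr₀A t ⟨hst, htr⟩
  · exfalso
    push_neg at htr
    set r₁ := min (r₀ + ε) t with hr₁d
    have hr₁ : r₀ < r₁ := lt_min (by linarith) htr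
    have hr₁A : r₁ ∈ A := by
      refine ⟨⟨by linarith, le_trans (min_le_right _ _) ht.2⟩, ?_⟩
      intro u hu
      rcases le_or_gt u r₀ with h' | h'
      · exact hr₀A u ⟨hu.1, h'⟩
      · have huI : u ∈ Set.Icc T₀ T₁ :=
          ⟨le_trans hs.1 hu.1, le_trans hu.2 (le_trans (min_le_right _ _) ht.2)⟩
        have habs : |u - r₀| ≤ ε := by
          rw [abs_of_nonneg (by linarith)]
          have h3 := hu.2
          have h4 : r₁ ≤ r₀ + ε := min_le_left _ _
          linarith
        have h1 : zCount (w u) m n ≤ zCount (w r₀) m n := (hloc u huI habs).1 h'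
        have h2 := hr₀A r₀ ⟨hsr, le_refl _⟩
        exact le_trans h1 h2
    have := le_csSup hbdd hr₁A
    linarith
end

section
/- Let w : [T₀,T₁] → ℝ^ℤ be a C¹ solution of the cooperative linear system such that w(t) has sub-exponential growth for every t ∈ [T₀,T₁], and let m < n be integers such that w_m(t) ≠ 0 and w_n(t) ≠ 0 for all t ∈ [T₀,T₁]. If for some t₀ ∈ (T₀,T₁) the configuration w(t₀) has a singular zero at some position j with m < j < n, then there exists δ₀ > 0 such that for every real δ with 0 < |δ| ≤ δ₀ and t₀ + δ ∈ [T₀,T₁], the configuration w(t₀+δ) has no singular zero at any position j with m < j < n. -/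
open Set Filter Topology

/-- The zero of `w` at `j` is singular. -/
def singZeroAt (w : ℤ → ℝ) (j : ℤ) : Prop :=
  w j = 0 ∧ (w (j + 1) = 0 ∨ w (j - 1) = 0 ∨ w (j - 1) * w (j + 1) > 0)

/-- sign as ±1 -/
noncomputable def sgn0 (x : ℝ) : ℝ := if 0 < x then 1 else -1

lemma sgn0_mul_pos {x : ℝ} (hx : x ≠ 0) : 0 < sgn0 x * x := by
  unfold sgn0; split
  · simpa using by assumption
  · rename_i h
    have : x < 0 := lt_of_le_of_ne (not_lt.mp h) hx
    nlinarith

lemma sgn0_cases (x : ℝ) : sgn0 x = 1 ∨ sgn0 x = -1 := by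
  unfold sgn0; split <;> simp

noncomputable def dL (v : ℤ → ℝ) (i : ℤ) : ℕ := sInf {k : ℕ | v (i - k) ≠ 0}
noncomputable def dR (v : ℤ → ℝ) (i : ℤ) : ℕ := sInf {k : ℕ | v (i + k) ≠ 0}

lemma dL_spec {v : ℤ → ℝ} {i : ℤ} (h : {k : ℕ | v (i - k) ≠ 0}.Nonempty) :
    v (i - dL v i) ≠ 0 := Nat.sInf_mem h

lemma dR_spec {v : ℤ → ℝ} {i : ℤ} (h : {k : ℕ | v (i + k) ≠ 0}.Nonempty) :
    v (i + dR v i) ≠ 0 := Nat.sInf_mem h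

lemma dL_small {v : ℤ → ℝ} {i : ℤ} {k : ℕ} (hk : k < dL v i) : v (i - k) = 0 := by
  by_contra h
  exact absurd (Nat.sInf_le (by exact h : k ∈ {k : ℕ | v (i - k) ≠ 0})) (not_le.mpr hk)

lemma dR_small {v : ℤ → ℝ} {i : ℤ} {k : ℕ} (hk : k < dR v i) : v (i + k) = 0 := by
  by_contra h
  exact absurd (Nat.sInf_le (by exact h : k ∈ {k : ℕ | v (i + k) ≠ 0})) (not_le.mpr hk)

lemma dL_eq_zero {v : ℤ → ℝ} {i : ℤ} (h : v i ≠ 0) : dL v i = 0 :=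
  Nat.sInf_eq_zero.mpr (Or.inl (by simpa using h))

lemma dR_eq_zero {v : ℤ → ℝ} {i : ℤ} (h : v i ≠ 0) : dR v i = 0 :=
  Nat.sInf_eq_zero.mpr (Or.inl (by simpa using h))

lemma dL_pos_zero {v : ℤ → ℝ} {i : ℤ} (h : 0 < dL v i) : v i = 0 := by
  have := dL_small h; simpa using this

lemma dR_pos_zero {v : ℤ → ℝ} {i : ℤ} (h : 0 < dR v i) : v i = 0 := by
  have := dR_small h; simpa using this

lemma dL_succ {v : ℤ → ℝ} {i : ℤ} (h : v i = 0)
    (hne : {k : ℕ | v (i - k) ≠ 0}.Nonempty) : dL v i = dL v (i - 1) + 1 := by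
  have hne' : {k : ℕ | v (i - 1 - k) ≠ 0}.Nonempty := by
    obtain ⟨k, hk⟩ := hne
    rcases k with _ | k
    · simp at hk; exact absurd h hk
    · refine ⟨k, ?_⟩
      have he : i - 1 - (k : ℤ) = i - ((k+1 : ℕ) : ℤ) := by push_cast; ring
      show v (i - 1 - (k:ℤ)) ≠ 0
      rw [he]; exact hk
  apply le_antisymm
  · apply Nat.sInf_le
    show v (i - ((dL v (i-1) + 1 : ℕ) : ℤ)) ≠ 0
    have h2 := dL_spec hne'
    have he : i - ((dL v (i-1) + 1 : ℕ) : ℤ) = i - 1 - (dL v (i-1) : ℤ) := by push_cast; ring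
    rw [he]; exact h2
  · apply le_csInf hne
    intro k hk
    rcases k with _ | k
    · simp at hk; exact absurd h hk
    · have : dL v (i - 1) ≤ k := Nat.sInf_le (by
        show v (i - 1 - (k:ℤ)) ≠ 0
        have he : i - 1 - (k : ℤ) = i - ((k+1 : ℕ) : ℤ) := by push_cast; ring
        rw [he]; exact hk)
      omega

lemma dR_succ {v : ℤ → ℝ} {i : ℤ} (h : v i = 0)
    (hne : {k : ℕ | v (i + k) ≠ 0}.Nonempty) : dR v i = dR v (i + 1) + 1 := by
  have hne' : {k : ℕ | v (i + 1 + k) ≠ 0}.Nonempty := by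
    obtain ⟨k, hk⟩ := hne
    rcases k with _ | k
    · simp at hk; exact absurd h hk
    · refine ⟨k, ?_⟩
      have he : i + 1 + (k : ℤ) = i + ((k+1 : ℕ) : ℤ) := by push_cast; ring
      show v (i + 1 + (k:ℤ)) ≠ 0
      rw [he]; exact hk
  apply le_antisymm
  · apply Nat.sInf_le
    show v (i + ((dR v (i+1) + 1 : ℕ) : ℤ)) ≠ 0
    have h2 := dR_spec hne'
    have he : i + ((dR v (i+1) + 1 : ℕ) : ℤ) = i + 1 + (dR v (i+1) : ℤ) := by push_cast; ring
    rw [he]; exact h2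
  · apply le_csInf hne
    intro k hk
    rcases k with _ | k
    · simp at hk; exact absurd h hk
    · have : dR v (i + 1) ≤ k := Nat.sInf_le (by
        show v (i + 1 + (k:ℤ)) ≠ 0
        have he : i + 1 + (k : ℤ) = i + ((k+1 : ℕ) : ℤ) := by push_cast; ring
        rw [he]; exact hk)
      omega

lemma intLemma_upper {η K : ℝ} {l : ℕ} {f g : ℝ → ℝ}
    (hf : ∀ τ ∈ Icc (0:ℝ) η, HasDerivWithinAt f (g τ) (Icc 0 η) τ)
    (hf0 : f 0 = 0)
    (hg : ∀ τ ∈ Icc (0:ℝ) η, |g τ| ≤ K * τ ^ l) :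
    ∀ τ ∈ Icc (0:ℝ) η, |f τ| ≤ K * τ ^ (l + 1) := by
  intro τ hτ
  have hK : 0 ≤ K * τ ^ l := le_trans (abs_nonneg _) (hg τ hτ)
  have h1 : ∀ x ∈ Icc (0:ℝ) τ, HasDerivWithinAt f (g x) (Icc 0 τ) x := fun x hx =>
    (hf x ⟨hx.1, hx.2.trans hτ.2⟩).mono (Icc_subset_Icc le_rfl hτ.2)
  have h2 : ∀ x ∈ Ico (0:ℝ) τ, ‖g x‖ ≤ K * τ ^ l := by
    intro x hx
    have hb := hg x ⟨hx.1, hx.2.le.trans hτ.2⟩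
    have : K * x ^ l ≤ K * τ ^ l := by
      rcases le_or_gt K 0 with h | h
      · nlinarith [pow_le_pow_left₀ hx.1 hx.2.le l, pow_nonneg hx.1 l]
      · have := pow_le_pow_left₀ hx.1 hx.2.le l
        nlinarith
    exact le_trans hb this
  have := norm_image_sub_le_of_norm_deriv_le_segment' h1 h2 τ (right_mem_Icc.2 hτ.1)
  rw [hf0, sub_zero] at this
  calc |f τ| ≤ K * τ ^ l * (τ - 0) := this
    _ = K * τ ^ (l + 1) := by ring

lemma intLemma_lower {η K : ℝ} {k : ℕ} {f g : ℝ → ℝ} (hη : 0 ≤ η)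
    (hf : ∀ τ ∈ Icc (0:ℝ) η, HasDerivWithinAt f (g τ) (Icc 0 η) τ)
    (hf0 : f 0 = 0)
    (hg : ∀ τ ∈ Icc (0:ℝ) η, K * τ ^ k ≤ g τ) :
    ∀ τ ∈ Icc (0:ℝ) η, K / (k + 1) * τ ^ (k + 1) ≤ f τ := by
  have hmono : MonotoneOn (fun τ => f τ - K / (k+1) * τ ^ (k+1)) (Icc 0 η) := by
    apply monotoneOn_of_hasDerivWithinAt_nonneg (convex_Icc 0 η)
      (f' := fun τ => g τ - K * τ ^ k)
    · exact ContinuousOn.sub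
        (fun x hx => (hf x hx).continuousWithinAt)
        (Continuous.continuousOn (by continuity))
    · intro x hx
      have hx' : x ∈ Icc (0:ℝ) η := interior_subset hx
      have hd : HasDerivWithinAt (fun τ : ℝ => K / (k+1) * τ ^ (k+1))
          (K * x ^ k) (interior (Icc (0:ℝ) η)) x := by
        have := ((hasDerivAt_pow (k+1) x).const_mul (K / (k+1))).hasDerivWithinAt
          (s := interior (Icc (0:ℝ) η))
        have hk1 : ((k:ℝ) + 1) ≠ 0 := by positivity
        have e : K / (k+1) * (((k+1 : ℕ) : ℝ) * x ^ (k+1-1)) = K * x ^ k := by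
          rw [Nat.add_sub_cancel]; push_cast; rw [← mul_assoc, div_mul_cancel₀ _ hk1]
        rw [e] at this
        exact this
      exact ((hf x hx').mono interior_subset).sub hd
    · intro x hx
      have hx' : x ∈ Icc (0:ℝ) η := interior_subset hx
      have := hg x hx'
      simp only [sub_nonneg]
      linarith
  intro τ hτ
  have := hmono (left_mem_Icc.mpr hη) hτ hτ.1
  simp only [hf0] at this
  have h0 : (0:ℝ) ^ (k+1) = 0 := by simp
  rw [h0] at this
  linarith

lemma exists_unif_down {F : Finset ℤ} {P : ℤ → ℝ → Prop}
    (mono : ∀ i ∈ F, ∀ e e', 0 < e' → e' ≤ e → P i e → P i e')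
    (h : ∀ i ∈ F, ∃ e, 0 < e ∧ P i e) : ∃ e, 0 < e ∧ ∀ i ∈ F, P i e := by
  classical
  induction F using Finset.induction with
  | empty => exact ⟨1, one_pos, by simp⟩
  | @insert a F ha ih =>
    obtain ⟨e₁, he₁, hP₁⟩ := h a (Finset.mem_insert_self a F)
    obtain ⟨e₂, he₂, hP₂⟩ := ih
      (fun i hi => mono i (Finset.mem_insert_of_mem hi))
      (fun i hi => h i (Finset.mem_insert_of_mem hi))
    refine ⟨min e₁ e₂, lt_min he₁ he₂, ?_⟩
    intro i hi
    rcases Finset.mem_insert.mp hi with rfl | hi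
    · exact mono i (Finset.mem_insert_self i F) e₁ _ (lt_min he₁ he₂) (min_le_left _ _) hP₁
    · exact mono i (Finset.mem_insert_of_mem hi) e₂ _ (lt_min he₁ he₂) (min_le_right _ _)
        (hP₂ i hi)

lemma exists_unif_up {F : Finset ℤ} {P : ℤ → ℝ → Prop}
    (mono : ∀ i ∈ F, ∀ C C', C ≤ C' → P i C → P i C')
    (h : ∀ i ∈ F, ∃ C, P i C) : ∃ C, 1 ≤ C ∧ ∀ i ∈ F, P i C := by
  classical
  induction F using Finset.induction with
  | empty => exact ⟨1, le_refl _, by simp⟩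
  | @insert a F ha ih =>
    obtain ⟨C₁, hP₁⟩ := h a (Finset.mem_insert_self a F)
    obtain ⟨C₂, hC₂, hP₂⟩ := ih
      (fun i hi => mono i (Finset.mem_insert_of_mem hi))
      (fun i hi => h i (Finset.mem_insert_of_mem hi))
    refine ⟨max C₁ C₂, le_trans hC₂ (le_max_right _ _), ?_⟩
    intro i hi
    rcases Finset.mem_insert.mp hi with rfl | hi
    · exact mono i (Finset.mem_insert_self i F) C₁ _ (le_max_left _ _) hP₁
    · exact mono i (Finset.mem_insert_of_mem hi) C₂ _ (le_max_right _ _) (hP₂ i hi)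

/-- Hypothesis bundle for the normalized forward system on `[0, η]`. -/
structure GoodSys (m n : ℤ) (η δc Cb : ℝ) (W : ℝ → ℤ → ℝ) (A B C₀ : ℤ → ℝ → ℝ) : Prop where
  hmn : m < n
  hη : 0 < η
  hδ : 0 < δc
  hCb : 1 ≤ Cb
  hA : ∀ i, m < i → i < n → ∀ τ ∈ Icc (0:ℝ) η, δc ≤ A i τ ∧ A i τ ≤ Cb
  hB : ∀ i, m < i → i < n → ∀ τ ∈ Icc (0:ℝ) η, δc ≤ B i τ ∧ B i τ ≤ Cb
  hC : ∀ i, m < i → i < n → ∀ τ ∈ Icc (0:ℝ) η, |C₀ i τ| ≤ Cb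
  hode : ∀ i, m < i → i < n → ∀ τ ∈ Icc (0:ℝ) η, HasDerivWithinAt (fun σ => W σ i)
      (A i τ * W τ (i-1) + B i τ * W τ (i+1) + C₀ i τ * W τ i) (Icc 0 η) τ
  hcont : ∀ i, m ≤ i → i ≤ n → ContinuousOn (fun τ => W τ i) (Icc 0 η)
  hWm : W 0 m ≠ 0
  hWn : W 0 n ≠ 0

namespace GoodSys

variable {m n : ℤ} {η δc Cb : ℝ} {W : ℝ → ℤ → ℝ} {A B C₀ : ℤ → ℝ → ℝ}
variable (G : GoodSys m n η δc Cb W A B C₀)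
include G

lemma neL {i : ℤ} (hi : m ≤ i) : {k : ℕ | W 0 (i - k) ≠ 0}.Nonempty := by
  refine ⟨(i - m).toNat, ?_⟩
  have : i - ((i - m).toNat : ℤ) = m := by omega
  show W 0 (i - ((i - m).toNat : ℤ)) ≠ 0
  rw [this]; exact G.hWm

lemma neR {i : ℤ} (hi : i ≤ n) : {k : ℕ | W 0 (i + k) ≠ 0}.Nonempty := by
  refine ⟨(n - i).toNat, ?_⟩
  have : i + ((n - i).toNat : ℤ) = n := by omega
  show W 0 (i + ((n - i).toNat : ℤ)) ≠ 0
  rw [this]; exact G.hWn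

lemma dL_le {i : ℤ} (hi : m ≤ i) : (dL (W 0) i : ℤ) ≤ i - m := by
  have h : dL (W 0) i ≤ (i - m).toNat := Nat.sInf_le (by
    have : i - ((i - m).toNat : ℤ) = m := by omega
    show W 0 (i - ((i - m).toNat : ℤ)) ≠ 0
    rw [this]; exact G.hWm)
  omega

lemma dR_le {i : ℤ} (hi : i ≤ n) : (dR (W 0) i : ℤ) ≤ n - i := by
  have h : dR (W 0) i ≤ (n - i).toNat := Nat.sInf_le (by
    have : i + ((n - i).toNat : ℤ) = n := by omega
    show W 0 (i + ((n - i).toNat : ℤ)) ≠ 0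
    rw [this]; exact G.hWn)
  omega

/-- positions with positive depth are strictly interior -/
lemma interior_of_pos {i : ℤ} (him : m ≤ i) (hin : i ≤ n) (h : W 0 i = 0) :
    m < i ∧ i < n := by
  constructor
  · rcases eq_or_lt_of_le him with rfl | h' 
    · exact absurd h G.hWm
    · exact h'
  · rcases eq_or_lt_of_le hin with rfl | h'
    · exact absurd h G.hWn
    · exact h'

/-- global bound on the finitely many relevant coordinates -/
lemma global_bound : ∃ Bb, 1 ≤ Bb ∧ ∀ i, m ≤ i → i ≤ n → ∀ τ ∈ Icc (0:ℝ) η, |W τ i| ≤ Bb := by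
  have h : ∀ i ∈ Finset.Icc m n, ∃ C : ℝ, ∀ τ ∈ Icc (0:ℝ) η, |W τ i| ≤ C := by
    intro i hi
    rw [Finset.mem_Icc] at hi
    obtain ⟨C, hC⟩ := (isCompact_Icc).exists_bound_of_continuousOn (G.hcont i hi.1 hi.2)
    exact ⟨C, fun τ hτ => by simpa [Real.norm_eq_abs] using hC τ hτ⟩
  obtain ⟨C, hC1, hC⟩ := exists_unif_up
    (fun i _ C C' hCC hP τ hτ => le_trans (hP τ hτ) hCC) h
  exact ⟨C, hC1, fun i h1 h2 τ hτ => hC i (Finset.mem_Icc.mpr ⟨h1, h2⟩) τ hτ⟩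

/-- Step 1: upper bounds of polynomial order `min (dL, dR)`. -/
lemma upper : ∀ l : ℕ, ∃ M, 1 ≤ M ∧ ∀ i, m ≤ i → i ≤ n →
    l ≤ min (dL (W 0) i) (dR (W 0) i) → ∀ τ ∈ Icc (0:ℝ) η, |W τ i| ≤ M * τ ^ l := by
  intro l
  induction l with
  | zero =>
    obtain ⟨Bb, hBb1, hBb⟩ := G.global_bound
    exact ⟨Bb, hBb1, fun i h1 h2 _ τ hτ => by simpa using hBb i h1 h2 τ hτ⟩
  | succ l ih =>
    obtain ⟨M, hM1, hM⟩ := ih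
    refine ⟨3 * Cb * M, by nlinarith [G.hCb], ?_⟩
    intro i him hin hdep
    have hdL : l + 1 ≤ dL (W 0) i := le_trans hdep (min_le_left _ _) |>.trans (le_refl _)
    have hdR : l + 1 ≤ dR (W 0) i := le_trans hdep (min_le_right _ _)
    have hW0 : W 0 i = 0 := dL_pos_zero (by omega)
    obtain ⟨h1, h2⟩ := G.interior_of_pos him hin hW0
    -- neighbors have depth ≥ l
    have hnbr : ∀ j, j = i - 1 ∨ j = i + 1 → l ≤ min (dL (W 0) j) (dR (W 0) j) := by
      intro j hj
      rcases Nat.eq_zero_or_pos l with rfl | hl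
      · simp
      rcases hj with rfl | rfl
      · -- i - 1 : W 0 (i-1) = 0 since dL i ≥ 2
        have hz : W 0 (i - 1) = 0 := by
          have := dL_small (v := W 0) (i := i) (k := 1) (by omega)
          simpa using this
        have e1 : dL (W 0) i = dL (W 0) (i - 1) + 1 := dL_succ hW0 (G.neL him)
        have e2 : dR (W 0) (i - 1) = dR (W 0) i + 1 := by
          have := dR_succ (v := W 0) (i := i - 1) hz (G.neR (by omega))
          simpa using this
        omega
      · have hz : W 0 (i + 1) = 0 := by
          have := dR_small (v := W 0) (i := i) (k := 1) (by omega)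
          simpa using this
        have e1 : dR (W 0) i = dR (W 0) (i + 1) + 1 := dR_succ hW0 (G.neR hin)
        have e2 : dL (W 0) (i + 1) = dL (W 0) i + 1 := by
          have := dL_succ (v := W 0) (i := i + 1) hz (G.neL (by omega))
          simpa using this
        omega
    have bm := hM (i-1) (by omega) (by omega) (hnbr _ (Or.inl rfl))
    have bp := hM (i+1) (by omega) (by omega) (hnbr _ (Or.inr rfl))
    have bs := hM i him hin (le_trans (by omega) hdep)
    have key := intLemma_upper (K := 3 * Cb * M) (l := l)
      (f := fun τ => W τ i)
      (g := fun τ => A i τ * W τ (i-1) + B i τ * W τ (i+1) + C₀ i τ * W τ i)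
      (fun τ hτ => G.hode i h1 h2 τ hτ) hW0 ?_
    · exact fun τ hτ => key τ hτ
    · intro τ hτ
      have hA := G.hA i h1 h2 τ hτ
      have hB := G.hB i h1 h2 τ hτ
      have hC := G.hC i h1 h2 τ hτ
      have hAabs : |A i τ| ≤ Cb := by
        rw [abs_le]; constructor <;> nlinarith [G.hδ]
      have hBabs : |B i τ| ≤ Cb := by
        rw [abs_le]; constructor <;> nlinarith [G.hδ]
      calc |A i τ * W τ (i-1) + B i τ * W τ (i+1) + C₀ i τ * W τ i|
          ≤ |A i τ * W τ (i-1)| + |B i τ * W τ (i+1)| + |C₀ i τ * W τ i| := by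
            exact (abs_add_le _ _).trans (by gcongr; exact abs_add_le _ _)
        _ ≤ Cb * (M * τ^l) + Cb * (M * τ^l) + Cb * (M * τ^l) := by
            have h0C : (0:ℝ) ≤ Cb := le_trans zero_le_one G.hCb
            rw [abs_mul, abs_mul, abs_mul]
            have t1 := mul_le_mul hAabs (bm τ hτ) (abs_nonneg _) h0C
            have t2 := mul_le_mul hBabs (bp τ hτ) (abs_nonneg _) h0C
            have t3 := mul_le_mul hC (bs τ hτ) (abs_nonneg _) h0C
            linarith
        _ = 3 * Cb * M * τ ^ l := by ring

end GoodSys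

lemma exists_unif_down2 {F : Finset ℤ} {P : ℤ → ℝ → ℝ → Prop}
    (mono : ∀ i ∈ F, ∀ e e' g g', 0 < e' → e' ≤ e → 0 < g' → g' ≤ g → P i e g → P i e' g')
    (h : ∀ i ∈ F, ∃ e g, 0 < e ∧ 0 < g ∧ P i e g) :
    ∃ e g, 0 < e ∧ 0 < g ∧ ∀ i ∈ F, P i e g := by
  classical
  induction F using Finset.induction with
  | empty => exact ⟨1, 1, one_pos, one_pos, by simp⟩
  | @insert a F ha ih =>
    obtain ⟨e₁, g₁, he₁, hg₁, hP₁⟩ := h a (Finset.mem_insert_self a F)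
    obtain ⟨e₂, g₂, he₂, hg₂, hP₂⟩ := ih
      (fun i hi => mono i (Finset.mem_insert_of_mem hi))
      (fun i hi => h i (Finset.mem_insert_of_mem hi))
    refine ⟨min e₁ e₂, min g₁ g₂, lt_min he₁ he₂, lt_min hg₁ hg₂, ?_⟩
    intro i hi
    rcases Finset.mem_insert.mp hi with rfl | hi
    · exact mono i (Finset.mem_insert_self i F) e₁ _ g₁ _ (lt_min he₁ he₂) (min_le_left _ _)
        (lt_min hg₁ hg₂) (min_le_left _ _) hP₁
    · exact mono i (Finset.mem_insert_of_mem hi) e₂ _ g₂ _ (lt_min he₁ he₂) (min_le_right _ _)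
        (lt_min hg₁ hg₂) (min_le_right _ _) (hP₂ i hi)

namespace GoodSys

variable {m n : ℤ} {η δc Cb : ℝ} {W : ℝ → ℤ → ℝ} {A B C₀ : ℤ → ℝ → ℝ}
variable (G : GoodSys m n η δc Cb W A B C₀)
include G

/-- anchor positions keep a definite sign for a short time -/
lemma anchor : ∃ e α, 0 < e ∧ 0 < α ∧ e ≤ η ∧ ∀ i, m ≤ i → i ≤ n → W 0 i ≠ 0 →
    ∀ τ ∈ Icc (0:ℝ) e, α ≤ sgn0 (W 0 i) * W τ i := by
  have key : ∀ i ∈ Finset.Icc m n, ∃ e g, 0 < e ∧ 0 < g ∧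
      (W 0 i ≠ 0 → ∀ τ ∈ Icc (0:ℝ) e, τ ≤ η → g ≤ sgn0 (W 0 i) * W τ i) := by
    intro i hi
    rw [Finset.mem_Icc] at hi
    by_cases h0 : W 0 i = 0
    · exact ⟨1, 1, one_pos, one_pos, fun h => absurd h0 h⟩
    · have hφ : ContinuousOn (fun τ => sgn0 (W 0 i) * W τ i) (Icc 0 η) :=
        (G.hcont i hi.1 hi.2).const_smul (sgn0 (W 0 i))
      have h00 : (0:ℝ) ∈ Icc (0:ℝ) η := left_mem_Icc.mpr G.hη.le
      have hval : 0 < sgn0 (W 0 i) * W 0 i := sgn0_mul_pos h0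
      set φ0 := sgn0 (W 0 i) * W 0 i with hφ0
      have hmem : {x : ℝ | φ0 / 2 < sgn0 (W 0 i) * W x i} ∈ 𝓝[Icc (0:ℝ) η] 0 := by
        have := hφ 0 h00
        exact this (Ioi_mem_nhds (by linarith) : Ioi (φ0/2) ∈ 𝓝 (sgn0 (W 0 i) * W 0 i))
      rw [Metric.mem_nhdsWithin_iff] at hmem
      obtain ⟨ε, hε, hsub⟩ := hmem
      refine ⟨ε / 2, φ0 / 2, by linarith, by linarith, fun _ τ hτ hτη => ?_⟩
      have : τ ∈ Metric.ball (0:ℝ) ε ∩ Icc 0 η := by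
        constructor
        · rw [Metric.mem_ball, Real.dist_eq, sub_zero, abs_of_nonneg hτ.1]
          linarith [hτ.2]
        · exact ⟨hτ.1, hτη⟩
      exact (hsub this).le
  obtain ⟨e, g, he, hg, hP⟩ := exists_unif_down2
    (fun i _ e e' g g' he' hee' hg' hgg' hP h0 τ hτ hτη =>
      le_trans hgg' (hP h0 τ ⟨hτ.1, hτ.2.trans hee'⟩ hτη)) key
  refine ⟨min e η, g, lt_min he G.hη, hg, min_le_right _ _, ?_⟩
  intro i h1 h2 h0 τ hτ
  exact hP i (Finset.mem_Icc.mpr ⟨h1, h2⟩) h0 τ ⟨hτ.1, hτ.2.trans (min_le_left _ _)⟩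
    (hτ.2.trans (min_le_right _ _))

/-- the main chain of lower bounds, propagating from the left anchor -/
lemma chain : ∀ k : ℕ, ∃ γ e, 0 < γ ∧ 0 < e ∧ e ≤ η ∧ ∀ i, m ≤ i → i ≤ n →
    dL (W 0) i = k → (k = 0 ∨ k < dR (W 0) i) → ∀ τ ∈ Icc (0:ℝ) e,
    γ * τ ^ k ≤ sgn0 (W 0 (i - k)) * W τ i := by
  intro k
  induction k with
  | zero =>
    obtain ⟨e, α, he, hα, heη, hanch⟩ := G.anchor
    refine ⟨α, e, hα, he, heη, ?_⟩
    intro i h1 h2 hdl _ τ hτ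
    have h0 : W 0 i ≠ 0 := by
      have := dL_spec (G.neL h1)
      rw [hdl] at this
      simpa using this
    have : i - ((0:ℕ):ℤ) = i := by simp
    rw [this, pow_zero, mul_one]
    exact hanch i h1 h2 h0 τ hτ
  | succ k ih =>
    obtain ⟨γ, e, hγ, he, heη, hch⟩ := ih
    obtain ⟨M, hM1, hM⟩ := G.upper (k+1)
    have hCb0 : (0:ℝ) < Cb := lt_of_lt_of_le one_pos G.hCb
    have hM0 : (0:ℝ) < M := lt_of_lt_of_le one_pos hM1
    have hδ := G.hδ
    set e' := min e (δc * γ / (4 * Cb * M)) with he'def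
    have he' : 0 < e' := lt_min he (by positivity)
    set γ' := (δc * γ / 2) / ((k:ℝ) + 1) with hγ'def
    refine ⟨γ', e', by positivity, he', le_trans (min_le_left _ _) heη, ?_⟩
    intro i h1 h2 hdl hside
    have hdr : k + 1 < dR (W 0) i := by
      rcases hside with h | h
      · omega
      · exact h
    have hW0 : W 0 i = 0 := dL_pos_zero (by omega)
    obtain ⟨him, hin⟩ := G.interior_of_pos h1 h2 hW0
    -- the left neighbor
    have hdlm : dL (W 0) (i - 1) = k := by
      have := dL_succ hW0 (G.neL h1); omega
    have hsidem : k = 0 ∨ k < dR (W 0) (i - 1) := by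
      rcases Nat.eq_zero_or_pos k with rfl | hk
      · exact Or.inl rfl
      · right
        have hzm : W 0 (i - 1) = 0 := by
          have := dL_small (v := W 0) (i := i) (k := 1) (by omega)
          simpa using this
        have : dR (W 0) (i - 1) = dR (W 0) i + 1 := by
          have := dR_succ (v := W 0) (i := i - 1) hzm (G.neR (by omega))
          simpa using this
        omega
    -- upper bounds for i and i+1 at level k+1
    have hzp : W 0 (i + 1) = 0 := by
      have := dR_small (v := W 0) (i := i) (k := 1) (by omega)
      simpa using this
    have hup_p : k + 1 ≤ min (dL (W 0) (i+1)) (dR (W 0) (i+1)) := by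
      have e1 : dR (W 0) i = dR (W 0) (i + 1) + 1 := dR_succ hW0 (G.neR h2)
      have e2 : dL (W 0) (i + 1) = dL (W 0) i + 1 := by
        have := dL_succ (v := W 0) (i := i + 1) hzp (G.neL (by omega))
        simpa using this
      omega
    have hup_s : k + 1 ≤ min (dL (W 0) i) (dR (W 0) i) := by omega
    have bp := hM (i+1) (by omega) (by omega) hup_p
    have bs := hM i h1 h2 hup_s
    set s := sgn0 (W 0 (i - ((k:ℤ) + 1))) with hs
    have hbm : ∀ τ ∈ Icc (0:ℝ) e', γ * τ ^ k ≤ s * W τ (i - 1) := by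
      intro τ hτ
      have := hch (i-1) (by omega) (by omega) hdlm hsidem τ
        ⟨hτ.1, hτ.2.trans (min_le_left _ _)⟩
      have hidx : i - 1 - (k:ℤ) = i - ((k:ℤ) + 1) := by ring
      rw [hidx] at this
      exact this
    -- integrate
    have key := intLemma_lower (η := e') (K := δc * γ / 2) (k := k)
      (f := fun τ => s * W τ i)
      (g := fun τ => s * (A i τ * W τ (i-1) + B i τ * W τ (i+1) + C₀ i τ * W τ i))
      he'.le ?_ (by show s * W 0 i = 0; rw [hW0, mul_zero]) ?_
    · intro τ hτ
      have h := key τ hτ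
      rw [show (((k+1:ℕ)):ℤ) = (k:ℤ)+1 by push_cast; ring]
      exact h
    · intro τ hτ
      have hτη : τ ∈ Icc (0:ℝ) η := ⟨hτ.1, hτ.2.trans ((min_le_left _ _).trans heη)⟩
      exact ((G.hode i him hin τ hτη).mono
        (Icc_subset_Icc le_rfl ((min_le_left _ _).trans heη))).const_mul s
    · intro τ hτ
      have hτη : τ ∈ Icc (0:ℝ) η := ⟨hτ.1, hτ.2.trans ((min_le_left _ _).trans heη)⟩
      have hA := G.hA i him hin τ hτη
      have hB := G.hB i him hin τ hτη
      have hC := G.hC i him hin τ hτη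
      have hτ0 : (0:ℝ) ≤ τ := hτ.1
      have habs_s : |s| = 1 := by
        rcases sgn0_cases (W 0 (i - ((k:ℤ) + 1))) with h | h <;> rw [← hs] at h <;>
          rw [h] <;> norm_num
      have ht1 : δc * (γ * τ ^ k) ≤ A i τ * (s * W τ (i-1)) :=
        mul_le_mul hA.1 (hbm τ hτ) (mul_nonneg hγ.le (pow_nonneg hτ0 k))
          (le_trans hδ.le hA.1)
      have hB2 : |B i τ| ≤ Cb := abs_le.mpr ⟨by nlinarith, hB.2⟩
      have ht2 : |B i τ * W τ (i+1)| ≤ Cb * (M * τ ^ (k+1)) := by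
        rw [abs_mul]
        exact mul_le_mul hB2 (bp τ hτη) (abs_nonneg _) hCb0.le
      have ht3 : |C₀ i τ * W τ i| ≤ Cb * (M * τ ^ (k+1)) := by
        rw [abs_mul]
        exact mul_le_mul hC (bs τ hτη) (abs_nonneg _) hCb0.le
      have hsmall : 2 * (Cb * (M * τ ^ (k+1))) ≤ δc * γ / 2 * τ ^ k := by
        have hτe : τ ≤ δc * γ / (4 * Cb * M) := hτ.2.trans (min_le_right _ _)
        have hpk : (0:ℝ) ≤ τ ^ k := pow_nonneg hτ0 k
        have h2 : 2 * (Cb * (M * τ ^ (k+1))) = (2 * Cb * M * τ) * τ ^ k := by ring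
        rw [h2]
        apply mul_le_mul_of_nonneg_right _ hpk
        calc 2 * Cb * M * τ ≤ 2 * Cb * M * (δc * γ / (4 * Cb * M)) :=
              mul_le_mul_of_nonneg_left hτe (by positivity)
          _ = δc * γ / 2 := by field_simp; ring
      have expand : s * (A i τ * W τ (i-1) + B i τ * W τ (i+1) + C₀ i τ * W τ i)
          = A i τ * (s * W τ (i-1)) + s * (B i τ * W τ (i+1)) + s * (C₀ i τ * W τ i) := by
        ring
      show δc * γ / 2 * τ ^ k ≤ s * (A i τ * W τ (i - 1) + B i τ * W τ (i + 1) + C₀ i τ * W τ i)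
      rw [expand]
      have habs2 : |s * (B i τ * W τ (i+1))| = |B i τ * W τ (i+1)| := by
        rw [abs_mul, habs_s, one_mul]
      have habs3 : |s * (C₀ i τ * W τ i)| = |C₀ i τ * W τ i| := by
        rw [abs_mul, habs_s, one_mul]
      have hb2 : -(Cb * (M * τ ^ (k+1))) ≤ s * (B i τ * W τ (i+1)) := by
        have := neg_abs_le (s * (B i τ * W τ (i+1)))
        rw [habs2] at this
        linarith
      have hb3 : -(Cb * (M * τ ^ (k+1))) ≤ s * (C₀ i τ * W τ i) := by
        have := neg_abs_le (s * (C₀ i τ * W τ i))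
        rw [habs3] at this
        linarith
      have hrw : δc * (γ * τ ^ k) = δc * γ * τ ^ k := by ring
      rw [hrw] at ht1
      linarith

end GoodSys

namespace GoodSys

variable {m n : ℤ} {η δc Cb : ℝ} {W : ℝ → ℤ → ℝ} {A B C₀ : ℤ → ℝ → ℝ}
variable (G : GoodSys m n η δc Cb W A B C₀)
include G

/-- spatial reflection `i ↦ m + n - i` -/
lemma reflect : GoodSys m n η δc Cb (fun τ i => W τ (m + n - i))
    (fun i τ => B (m + n - i) τ) (fun i τ => A (m + n - i) τ)
    (fun i τ => C₀ (m + n - i) τ) := by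
  refine ⟨G.hmn, G.hη, G.hδ, G.hCb, ?_, ?_, ?_, ?_, ?_, ?_, ?_⟩
  · exact fun i h1 h2 τ hτ => G.hB (m+n-i) (by omega) (by omega) τ hτ
  · exact fun i h1 h2 τ hτ => G.hA (m+n-i) (by omega) (by omega) τ hτ
  · exact fun i h1 h2 τ hτ => G.hC (m+n-i) (by omega) (by omega) τ hτ
  · intro i h1 h2 τ hτ
    have h := G.hode (m+n-i) (by omega) (by omega) τ hτ
    have heq : A (m+n-i) τ * W τ (m+n-i-1) + B (m+n-i) τ * W τ (m+n-i+1)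
        + C₀ (m+n-i) τ * W τ (m+n-i)
        = B (m+n-i) τ * W τ (m+n-(i-1)) + A (m+n-i) τ * W τ (m+n-(i+1))
        + C₀ (m+n-i) τ * W τ (m+n-i) := by
      rw [show m+n-(i-1) = m+n-i+1 from by ring, show m+n-(i+1) = m+n-i-1 from by ring]
      ring
    rw [heq] at h
    exact h
  · exact fun i h1 h2 => G.hcont (m+n-i) (by omega) (by omega)
  · show W 0 (m+n-m) ≠ 0
    rw [show m+n-m = n from by ring]
    exact G.hWn
  · show W 0 (m+n-n) ≠ 0
    rw [show m+n-n = m from by ring]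
    exact G.hWm

lemma chainR : ∀ k : ℕ, ∃ γ e, 0 < γ ∧ 0 < e ∧ e ≤ η ∧ ∀ i, m ≤ i → i ≤ n →
    dR (W 0) i = k → (k = 0 ∨ k < dL (W 0) i) → ∀ τ ∈ Icc (0:ℝ) e,
    γ * τ ^ k ≤ sgn0 (W 0 (i + k)) * W τ i := by
  intro k
  obtain ⟨γ, e, hγ, he, heη, hch⟩ := (G.reflect).chain k
  refine ⟨γ, e, hγ, he, heη, ?_⟩
  intro i h1 h2 hdr hside τ hτ
  have hsetL : {j : ℕ | (fun x => W 0 (m + n - x)) ((m + n - i) - j) ≠ 0}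
      = {j : ℕ | W 0 (i + j) ≠ 0} := by
    ext j
    simp only [Set.mem_setOf_eq]
    rw [show m + n - ((m + n - i) - (j:ℤ)) = i + j from by ring]
  have hsetR : {j : ℕ | (fun x => W 0 (m + n - x)) ((m + n - i) + j) ≠ 0}
      = {j : ℕ | W 0 (i - j) ≠ 0} := by
    ext j
    simp only [Set.mem_setOf_eq]
    rw [show m + n - ((m + n - i) + (j:ℤ)) = i - j from by ring]
  have hdl' : dL (fun x => W 0 (m + n - x)) (m + n - i) = dR (W 0) i := by
    unfold dL dR
    rw [hsetL]
  have hdr' : dR (fun x => W 0 (m + n - x)) (m + n - i) = dL (W 0) i := by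
    unfold dL dR
    rw [hsetR]
  have h := hch (m + n - i) (by omega) (by omega) (by rw [hdl']; exact hdr)
    (by rw [hdr']; exact hside) τ hτ
  rw [show m + n - ((m + n - i) - (k:ℤ)) = i + k from by ring,
    show m + n - (m + n - i) = i from by ring] at h
  exact h

omit G in
/-- no value within bound of a definite sign is zero -/
lemma ne_of_sgnbound {c x y : ℝ} (hc : 0 < c) (h : c ≤ x * y) : y ≠ 0 := by
  intro h0
  rw [h0, mul_zero] at h
  linarith

theorem main : ∃ e, 0 < e ∧ e ≤ η ∧ ∀ τ, 0 < τ → τ ≤ e → ∀ i, m < i → i < n →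
    ¬ singZeroAt (W τ) i := by
  have hCb0 : (0:ℝ) < Cb := lt_of_lt_of_le one_pos G.hCb
  have hδ := G.hδ
  have key : ∀ i ∈ Finset.Icc (m+1) (n-1), ∃ e, 0 < e ∧
      (∀ τ, 0 < τ → τ ≤ e → τ ≤ η → ¬ singZeroAt (W τ) i) := by
    intro i hi
    rw [Finset.mem_Icc] at hi
    have him : m < i := by omega
    have hin : i < n := by omega
    by_cases h0 : W 0 i = 0
    swap
    · -- anchor case
      obtain ⟨e, α, he, hα, heη, hanch⟩ := G.anchor
      refine ⟨e, he, fun τ hτ0 hτe _ hsing => ?_⟩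
      have := hanch i (by omega) (by omega) h0 τ ⟨hτ0.le, hτe⟩
      exact ne_of_sgnbound hα this hsing.1
    · have hk1 : 1 ≤ dL (W 0) i := by
        by_contra h
        have : dL (W 0) i = 0 := by omega
        have hs := dL_spec (G.neL him.le)
        rw [this] at hs
        simp at hs
        exact hs h0
      have hk2 : 1 ≤ dR (W 0) i := by
        by_contra h
        have : dR (W 0) i = 0 := by omega
        have hs := dR_spec (G.neR hin.le)
        rw [this] at hs
        simp at hs
        exact hs h0
      rcases lt_trichotomy (dL (W 0) i) (dR (W 0) i) with hlt | heq | hgt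
      · -- left depth smaller: W τ i ≠ 0 for small τ > 0
        obtain ⟨γ, e, hγ, he, heη, hch⟩ := G.chain (dL (W 0) i)
        refine ⟨e, he, fun τ hτ0 hτe _ hsing => ?_⟩
        have := hch i him.le hin.le rfl (Or.inr hlt) τ ⟨hτ0.le, hτe⟩
        exact ne_of_sgnbound (by positivity) this hsing.1
      · -- equal depths: the center case
        set l := dR (W 0) i with hldef
        obtain ⟨k, hlk⟩ : ∃ k, l = k + 1 := ⟨l - 1, by omega⟩
        -- left neighbor
        have hdlm : dL (W 0) (i-1) = k := by
          have := dL_succ h0 (G.neL him.le)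
          omega
        have hsidem : k = 0 ∨ k < dR (W 0) (i-1) := by
          rcases Nat.eq_zero_or_pos k with rfl | hk
          · exact Or.inl rfl
          · right
            have hzm : W 0 (i - 1) = 0 := by
              have := dL_small (v := W 0) (i := i) (k := 1) (by omega)
              simpa using this
            have : dR (W 0) (i - 1) = dR (W 0) i + 1 := by
              have := dR_succ (v := W 0) (i := i - 1) hzm (G.neR (by omega))
              simpa using this
            omega
        have hdrp : dR (W 0) (i+1) = k := by
          have := dR_succ h0 (G.neR hin.le)
          omega
        have hsidep : k = 0 ∨ k < dL (W 0) (i+1) := by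
          rcases Nat.eq_zero_or_pos k with rfl | hk
          · exact Or.inl rfl
          · right
            have hzp : W 0 (i + 1) = 0 := by
              have := dR_small (v := W 0) (i := i) (k := 1) (by omega)
              simpa using this
            have : dL (W 0) (i + 1) = dL (W 0) i + 1 := by
              have := dL_succ (v := W 0) (i := i + 1) hzp (G.neL (by omega))
              simpa using this
            omega
        obtain ⟨γL, eL, hγL, heL, heLη, hchL⟩ := G.chain k
        obtain ⟨γR, eR, hγR, heRp, heRη, hchR⟩ := G.chainR k
        have hbL : ∀ τ ∈ Icc (0:ℝ) eL,
            γL * τ ^ k ≤ sgn0 (W 0 (i - 1 - (k:ℤ))) * W τ (i-1) :=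
          fun τ hτ => hchL (i-1) (by omega) (by omega) hdlm hsidem τ hτ
        have hbR : ∀ τ ∈ Icc (0:ℝ) eR,
            γR * τ ^ k ≤ sgn0 (W 0 (i + 1 + (k:ℤ))) * W τ (i+1) :=
          fun τ hτ => hchR (i+1) (by omega) (by omega) hdrp hsidep τ hτ
        set sL := sgn0 (W 0 (i - 1 - (k:ℤ))) with hsL
        set sR := sgn0 (W 0 (i + 1 + (k:ℤ))) with hsR
        by_cases hss : sL = sR
        · -- same sign: W τ i gets a definite sign
          obtain ⟨M, hM1, hM⟩ := G.upper (k+1)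
          have hM0 : (0:ℝ) < M := lt_of_lt_of_le one_pos hM1
          have hup_s : k + 1 ≤ min (dL (W 0) i) (dR (W 0) i) := by omega
          have bs := hM i him.le hin.le hup_s
          set e' := min (min eL eR) (δc * γL / (4 * Cb * M)) with he'def
          have he' : 0 < e' := lt_min (lt_min heL heRp) (by positivity)
          have key := intLemma_lower (η := e') (K := δc * γL / 2) (k := k)
            (f := fun τ => sL * W τ i)
            (g := fun τ => sL * (A i τ * W τ (i-1) + B i τ * W τ (i+1) + C₀ i τ * W τ i))
            he'.le ?_ (by show sL * W 0 i = 0; rw [h0, mul_zero]) ?_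
          · refine ⟨e', he', fun τ hτ0 hτe _ hsing => ?_⟩
            have := key τ ⟨hτ0.le, hτe⟩
            refine ne_of_sgnbound (c := δc * γL / 2 / ((k:ℝ) + 1) * τ ^ (k+1))
              (by positivity) this hsing.1
          · intro τ hτ
            have hτη : τ ∈ Icc (0:ℝ) η :=
              ⟨hτ.1, hτ.2.trans (((min_le_left _ _).trans (min_le_left _ _)).trans heLη)⟩
            have hsub : Icc (0:ℝ) e' ⊆ Icc 0 η :=
              Icc_subset_Icc le_rfl (((min_le_left _ _).trans (min_le_left _ _)).trans heLη)
            exact ((G.hode i him hin τ hτη).mono hsub).const_mul sL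
          · intro τ hτ
            have hτη : τ ∈ Icc (0:ℝ) η :=
              ⟨hτ.1, hτ.2.trans (((min_le_left _ _).trans (min_le_left _ _)).trans heLη)⟩
            have hA := G.hA i him hin τ hτη
            have hB := G.hB i him hin τ hτη
            have hC := G.hC i him hin τ hτη
            have hτ0 : (0:ℝ) ≤ τ := hτ.1
            have habs_sL : |sL| = 1 := by
              rcases sgn0_cases (W 0 (i - 1 - (k:ℤ))) with h | h <;> rw [← hsL] at h <;>
                rw [h] <;> norm_num
            have ht1 : δc * (γL * τ ^ k) ≤ A i τ * (sL * W τ (i-1)) :=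
              mul_le_mul hA.1
                (hbL τ ⟨hτ.1, hτ.2.trans ((min_le_left _ _).trans (min_le_left _ _))⟩)
                (mul_nonneg hγL.le (pow_nonneg hτ0 k)) (le_trans hδ.le hA.1)
            have ht2 : 0 ≤ B i τ * (sL * W τ (i+1)) := by
              rw [hss]
              refine mul_nonneg (le_trans hδ.le hB.1) ?_
              refine le_trans ?_
                (hbR τ ⟨hτ.1, hτ.2.trans ((min_le_right _ _).trans' (min_le_left _ _))⟩)
              positivity
            have ht3 : |C₀ i τ * W τ i| ≤ Cb * (M * τ ^ (k+1)) := by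
              rw [abs_mul]
              exact mul_le_mul hC (bs τ hτη) (abs_nonneg _) hCb0.le
            have hsmall : Cb * (M * τ ^ (k+1)) ≤ δc * γL / 2 * τ ^ k := by
              have hτe : τ ≤ δc * γL / (4 * Cb * M) := hτ.2.trans (min_le_right _ _)
              have hpk : (0:ℝ) ≤ τ ^ k := pow_nonneg hτ0 k
              have h2 : Cb * (M * τ ^ (k+1)) = (Cb * M * τ) * τ ^ k := by ring
              rw [h2]
              apply mul_le_mul_of_nonneg_right _ hpk
              calc Cb * M * τ ≤ Cb * M * (δc * γL / (4 * Cb * M)) :=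
                    mul_le_mul_of_nonneg_left hτe (by positivity)
                _ = δc * γL / 4 := by field_simp
                _ ≤ δc * γL / 2 := by nlinarith
            show δc * γL / 2 * τ ^ k ≤ sL * (A i τ * W τ (i-1) + B i τ * W τ (i+1) + C₀ i τ * W τ i)
            have expand : sL * (A i τ * W τ (i-1) + B i τ * W τ (i+1) + C₀ i τ * W τ i)
                = A i τ * (sL * W τ (i-1)) + B i τ * (sL * W τ (i+1))
                  + sL * (C₀ i τ * W τ i) := by ring
            rw [expand]
            have hb3 : -(Cb * (M * τ ^ (k+1))) ≤ sL * (C₀ i τ * W τ i) := by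
              have hna := neg_abs_le (sL * (C₀ i τ * W τ i))
              have habs3 : |sL * (C₀ i τ * W τ i)| = |C₀ i τ * W τ i| := by
                rw [abs_mul, habs_sL, one_mul]
              rw [habs3] at hna
              linarith
            have hrw : δc * (γL * τ ^ k) = δc * γL * τ ^ k := by ring
            rw [hrw] at ht1
            linarith
        · -- opposite signs: the neighbors pin down a regular zero
          refine ⟨min eL eR, lt_min heL heRp, fun τ hτ0 hτe _ => ?_⟩
          have hbLτ := hbL τ ⟨hτ0.le, hτe.trans (min_le_left _ _)⟩
          have hbRτ := hbR τ ⟨hτ0.le, hτe.trans (min_le_right _ _)⟩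
          have hposL : 0 < sL * W τ (i-1) := lt_of_lt_of_le (by positivity) hbLτ
          have hposR : 0 < sR * W τ (i+1) := lt_of_lt_of_le (by positivity) hbRτ
          have hsLc := sgn0_cases (W 0 (i - 1 - (k:ℤ)))
          have hsRc := sgn0_cases (W 0 (i + 1 + (k:ℤ)))
          rw [← hsL] at hsLc
          rw [← hsR] at hsRc
          have hm1 : sL * sR = -1 := by
            rcases hsLc with h1 | h1 <;> rcases hsRc with h2 | h2
            · exact absurd (h1.trans h2.symm) hss
            · rw [h1, h2]; norm_num
            · rw [h1, h2]; norm_num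
            · exact absurd (h1.trans h2.symm) hss
          have hprod : W τ (i-1) * W τ (i+1) < 0 := by
            have hpp : 0 < (sL * W τ (i-1)) * (sR * W τ (i+1)) := mul_pos hposL hposR
            have he2 : (sL * W τ (i-1)) * (sR * W τ (i+1))
                = (sL * sR) * (W τ (i-1) * W τ (i+1)) := by ring
            rw [he2, hm1] at hpp
            linarith
          intro hsing
          rcases hsing.2 with h | h | h
          · rw [h, mul_zero] at hposR
            exact lt_irrefl 0 hposR
          · rw [h, mul_zero] at hposL
            exact lt_irrefl 0 hposL
          · linarith
      · -- right depth smaller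
        obtain ⟨γ, e, hγ, he, heη, hch⟩ := G.chainR (dR (W 0) i)
        refine ⟨e, he, fun τ hτ0 hτe _ hsing => ?_⟩
        have := hch i him.le hin.le rfl (Or.inr hgt) τ ⟨hτ0.le, hτe⟩
        exact ne_of_sgnbound (by positivity) this hsing.1
  obtain ⟨e0, he0, hkey⟩ := exists_unif_down
    (fun i _ e e' he' hee' hP τ hτ0 hτe hτη => hP τ hτ0 (hτe.trans hee') hτη) key
  refine ⟨min e0 η, lt_min he0 G.hη, min_le_right _ _, ?_⟩
  intro τ hτ0 hτe i him hin
  exact hkey i (Finset.mem_Icc.mpr ⟨by omega, by omega⟩) τ hτ0 (hτe.trans (min_le_left _ _))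
    (hτe.trans (min_le_right _ _))

end GoodSys


lemma singZeroAt_flip (v : ℤ → ℝ) (i : ℤ) :
    singZeroAt (fun j => (-1:ℝ) ^ j * v j) i ↔ singZeroAt v i := by
  have hne : ∀ j : ℤ, ((-1:ℝ) ^ j) ≠ 0 := fun j => zpow_ne_zero j (by norm_num)
  have hz : ∀ j : ℤ, ((-1:ℝ) ^ j * v j = 0) ↔ v j = 0 := by
    intro j
    constructor
    · intro h
      rcases mul_eq_zero.mp h with h | h
      · exact absurd h (hne j)
      · exact h
    · intro h
      rw [h, mul_zero]
  have hpm : (-1:ℝ) ^ (i-1) * (-1:ℝ) ^ (i+1) = 1 := by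
    rw [← zpow_add₀ (by norm_num : (-1:ℝ) ≠ 0)]
    rw [show i - 1 + (i + 1) = 2 * i from by ring]
    rw [zpow_mul]
    norm_num
  have hprod : (-1:ℝ) ^ (i-1) * v (i-1) * ((-1:ℝ) ^ (i+1) * v (i+1))
      = v (i-1) * v (i+1) := by
    calc (-1:ℝ) ^ (i-1) * v (i-1) * ((-1:ℝ) ^ (i+1) * v (i+1))
        = ((-1:ℝ) ^ (i-1) * (-1:ℝ) ^ (i+1)) * (v (i-1) * v (i+1)) := by ring
      _ = v (i-1) * v (i+1) := by rw [hpm, one_mul]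
  unfold singZeroAt
  rw [hz, hz, hz, hprod]

theorem no_singular_zero_near_singular_zero
    (T₀ T₁ δ : ℝ) (hT : T₀ < T₁) (hδ : 0 < δ)
    (a b c : ℤ → ℝ → ℝ) (w : ℝ → ℤ → ℝ)
    (hacont : ∀ j : ℤ, ContinuousOn (a j) (Set.Icc T₀ T₁))
    (hbcont : ∀ j : ℤ, ContinuousOn (b j) (Set.Icc T₀ T₁))
    (hccont : ∀ j : ℤ, ContinuousOn (c j) (Set.Icc T₀ T₁))
    (hbound : ∃ C : ℝ, ∀ j : ℤ, ∀ t ∈ Set.Icc T₀ T₁,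
      |a j t| ≤ C ∧ |b j t| ≤ C ∧ |c j t| ≤ C)
    (hpos : ∀ j : ℤ, ∀ t ∈ Set.Icc T₀ T₁, δ ≤ a j t ∧ δ ≤ b j t)
    (hsol : ∀ j : ℤ, ∀ t ∈ Set.Icc T₀ T₁,
      HasDerivWithinAt (fun s => w s j)
        (a j t * w t (j - 1) + b j t * w t (j + 1) + c j t * w t j) (Set.Icc T₀ T₁) t)
    (hsub : ∀ t ∈ Set.Icc T₀ T₁, SubExp (w t))
    (m n : ℤ) (hmn : m < n)
    (hm : ∀ t ∈ Set.Icc T₀ T₁, w t m ≠ 0)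
    (hn : ∀ t ∈ Set.Icc T₀ T₁, w t n ≠ 0)
    (t₀ : ℝ) (ht₀ : t₀ ∈ Set.Ioo T₀ T₁)
    (j : ℤ) (hjm : m < j) (hjn : j < n) (hsing : singZeroAt (w t₀) j) :
    ∃ δ₀ > (0 : ℝ), ∀ d : ℝ, 0 < |d| → |d| ≤ δ₀ → t₀ + d ∈ Set.Icc T₀ T₁ →
      ∀ i : ℤ, m < i → i < n → ¬ singZeroAt (w (t₀ + d)) i := by
  obtain ⟨C, hC⟩ := hbound
  obtain ⟨htl, htr⟩ := ht₀
  set η : ℝ := min (t₀ - T₀) (T₁ - t₀) with hηdef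
  have hη0 : 0 < η := lt_min (by linarith) (by linarith)
  set Cb := max C 1 with hCbdef
  have hCb : 1 ≤ Cb := le_max_right _ _
  have habsC : ∀ (j : ℤ), ∀ t ∈ Set.Icc T₀ T₁,
      |a j t| ≤ Cb ∧ |b j t| ≤ Cb ∧ |c j t| ≤ Cb := fun j t ht =>
    ⟨((hC j t ht).1).trans (le_max_left _ _), ((hC j t ht).2.1).trans (le_max_left _ _),
      ((hC j t ht).2.2).trans (le_max_left _ _)⟩
  have hmemF : ∀ τ ∈ Icc (0:ℝ) η, t₀ + τ ∈ Set.Icc T₀ T₁ := by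
    intro τ hτ
    have h2 : τ ≤ T₁ - t₀ := hτ.2.trans (min_le_right _ _)
    exact ⟨by linarith [hτ.1], by linarith⟩
  have hmemB : ∀ τ ∈ Icc (0:ℝ) η, t₀ - τ ∈ Set.Icc T₀ T₁ := by
    intro τ hτ
    have h2 : τ ≤ t₀ - T₀ := hτ.2.trans (min_le_left _ _)
    exact ⟨by linarith, by linarith [hτ.1]⟩
  have hwcont : ∀ i : ℤ, ContinuousOn (fun s => w s i) (Set.Icc T₀ T₁) :=
    fun i t ht => (hsol i t ht).continuousWithinAt
  have ht₀mem : t₀ ∈ Set.Icc T₀ T₁ := ⟨htl.le, htr.le⟩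
  -- forward system
  have GF : GoodSys m n η δ Cb (fun τ j => w (t₀ + τ) j) (fun j τ => a j (t₀ + τ))
      (fun j τ => b j (t₀ + τ)) (fun j τ => c j (t₀ + τ)) := by
    refine ⟨hmn, hη0, hδ, hCb, ?_, ?_, ?_, ?_, ?_, ?_, ?_⟩
    · exact fun i _ _ τ hτ => ⟨(hpos i _ (hmemF τ hτ)).1,
        (le_abs_self _).trans (habsC i _ (hmemF τ hτ)).1⟩
    · exact fun i _ _ τ hτ => ⟨(hpos i _ (hmemF τ hτ)).2,
        (le_abs_self _).trans (habsC i _ (hmemF τ hτ)).2.1⟩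
    · exact fun i _ _ τ hτ => (habsC i _ (hmemF τ hτ)).2.2
    · intro i _ _ τ hτ
      have h := hsol i (t₀ + τ) (hmemF τ hτ)
      have haff : HasDerivWithinAt (fun τ : ℝ => t₀ + τ) 1 (Icc 0 η) τ :=
        ((hasDerivAt_id τ).const_add t₀).hasDerivWithinAt
      have hcomp := HasDerivWithinAt.comp τ h haff (fun x hx => hmemF x hx)
      rw [mul_one] at hcomp
      exact hcomp
    · intro i _ _
      exact (hwcont i).comp
        (Continuous.continuousOn (continuous_const.add continuous_id))
        (fun x hx => hmemF x hx)
    · show w (t₀ + 0) m ≠ 0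
      rw [add_zero]
      exact hm t₀ ht₀mem
    · show w (t₀ + 0) n ≠ 0
      rw [add_zero]
      exact hn t₀ ht₀mem
  -- backward system, with alternating sign flip
  have GB : GoodSys m n η δ Cb (fun τ j => (-1:ℝ) ^ j * w (t₀ - τ) j)
      (fun j τ => a j (t₀ - τ)) (fun j τ => b j (t₀ - τ))
      (fun j τ => -(c j (t₀ - τ))) := by
    have hz1 : ∀ i : ℤ, ((-1:ℝ)) ^ (i - 1) = -(-1:ℝ) ^ i := by
      intro i
      rw [zpow_sub_one₀ (by norm_num : (-1:ℝ) ≠ 0)]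
      field_simp
    have hz2 : ∀ i : ℤ, ((-1:ℝ)) ^ (i + 1) = -(-1:ℝ) ^ i := by
      intro i
      rw [zpow_add_one₀ (by norm_num : (-1:ℝ) ≠ 0)]
      ring
    refine ⟨hmn, hη0, hδ, hCb, ?_, ?_, ?_, ?_, ?_, ?_, ?_⟩
    · exact fun i _ _ τ hτ => ⟨(hpos i _ (hmemB τ hτ)).1,
        (le_abs_self _).trans (habsC i _ (hmemB τ hτ)).1⟩
    · exact fun i _ _ τ hτ => ⟨(hpos i _ (hmemB τ hτ)).2,
        (le_abs_self _).trans (habsC i _ (hmemB τ hτ)).2.1⟩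
    · intro i _ _ τ hτ
      rw [abs_neg]
      exact (habsC i _ (hmemB τ hτ)).2.2
    · intro i _ _ τ hτ
      have h := hsol i (t₀ - τ) (hmemB τ hτ)
      have haff : HasDerivWithinAt (fun τ : ℝ => t₀ - τ) (-1) (Icc 0 η) τ :=
        ((hasDerivAt_id τ).const_sub t₀).hasDerivWithinAt
      have hcomp := (HasDerivWithinAt.comp τ h haff (fun x hx => hmemB x hx)).const_mul
        ((-1:ℝ) ^ i)
      have heq : (-1:ℝ) ^ i * ((a i (t₀ - τ) * w (t₀ - τ) (i - 1)
            + b i (t₀ - τ) * w (t₀ - τ) (i + 1) + c i (t₀ - τ) * w (t₀ - τ) i) * (-1))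
          = a i (t₀ - τ) * ((-1:ℝ) ^ (i-1) * w (t₀ - τ) (i - 1))
            + b i (t₀ - τ) * ((-1:ℝ) ^ (i+1) * w (t₀ - τ) (i + 1))
            + (-(c i (t₀ - τ))) * ((-1:ℝ) ^ i * w (t₀ - τ) i) := by
        rw [hz1 i, hz2 i]
        ring
      rw [heq] at hcomp
      simpa [Function.comp] using hcomp
    · intro i _ _
      exact (((hwcont i).comp
        (Continuous.continuousOn (continuous_const.sub continuous_id))
        (fun x hx => hmemB x hx))).const_smul ((-1:ℝ) ^ i)
    · show (-1:ℝ) ^ m * w (t₀ - 0) m ≠ 0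
      rw [sub_zero]
      exact mul_ne_zero (zpow_ne_zero m (by norm_num)) (hm t₀ ht₀mem)
    · show (-1:ℝ) ^ n * w (t₀ - 0) n ≠ 0
      rw [sub_zero]
      exact mul_ne_zero (zpow_ne_zero n (by norm_num)) (hn t₀ ht₀mem)
  obtain ⟨eF, heF, heFη, hF⟩ := GF.main
  obtain ⟨eB, heB, heBη, hB2⟩ := GB.main
  refine ⟨min eF eB, lt_min heF heB, ?_⟩
  intro d hd hdle _ i h1 h2
  rcases lt_trichotomy d 0 with hneg | hzero | hposd
  · have hτ : 0 < -d := by linarith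
    have habs : |d| = -d := abs_of_neg hneg
    have h := hB2 (-d) hτ (by rw [← habs]; exact hdle.trans (min_le_right _ _)) i h1 h2
    intro hsing
    apply h
    show singZeroAt (fun j => (-1:ℝ) ^ j * w (t₀ - -d) j) i
    rw [singZeroAt_flip]
    rw [show t₀ - -d = t₀ + d from by ring]
    exact hsing
  · rw [hzero] at hd
    simp at hd
  · have habs : |d| = d := abs_of_pos hposd
    have h := hF d hposd (by rw [← habs]; exact hdle.trans (min_le_left _ _)) i h1 h2
    exact h
end

section
/- Let u¹, u² : [T₀,T₁] → K_n be two solutions of the FK equation (with the same V and F). Then there exist δ' > 0 and continuous coefficient functions a_j, b_j, c_j : [T₀,T₁] → ℝ, uniformly bounded over all j ∈ ℤ and t ∈ [T₀,T₁] and satisfying a_j(t) ≥ δ' and b_j(t) ≥ δ', such that w = u² − u¹ satisfies, coordinatewise, w_j'(t) = a_j(t)·w_{j-1}(t) + b_j(t)·w_{j+1}(t) + c_j(t)·w_j(t) for all j and t, and each w(t) has sub-exponential growth. Moreover, if F is constant and u : [T₀,T₁] → K_n is a solution of the FK equation whose coordinates are twice continuously differentiable, the same conclusion holds for w defined by w_j(t)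 = u_j'(t). -/
open Set Filter Topology

/-- First partial derivative `∂₁V`. -/
noncomputable def V1 (V : ℝ → ℝ → ℝ) (x y : ℝ) : ℝ := deriv (fun s => V s y) x

/-- Second partial derivative `∂₂V`. -/
noncomputable def V2 (V : ℝ → ℝ → ℝ) (x y : ℝ) : ℝ := deriv (fun s => V x s) y

/-- Mixed partial derivative `∂₁∂₂V`. -/
noncomputable def V12 (V : ℝ → ℝ → ℝ) (x y : ℝ) : ℝ := deriv (fun s => V2 V s y) x

/-- The set of configurations with spacing bounded by `n`. -/
def Kn (n : ℕ) : Set (ℤ → ℝ) := {u | ∀ i : ℤ, |u (i + 1) - u i| ≤ (n : ℝ)}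

/-- `u` solves the driven Frenkel–Kontorova equation on the set of times `I`. -/
def SolvesFK (V : ℝ → ℝ → ℝ) (F : ℝ → ℝ) (I : Set ℝ) (u : ℝ → ℤ → ℝ) : Prop :=
  ∀ j : ℤ, ∀ t ∈ I, HasDerivWithinAt (fun s => u s j)
    (-(V2 V (u t (j - 1)) (u t j)) - V1 V (u t j) (u t (j + 1)) + F t) I t

/-- `w` is a solution of a cooperative linear system on `[T₀, T₁]` (with some lower
bound `δ' > 0` on the off-diagonal coefficients), each `w t` of sub-exponential growth. -/
def IsCoopSolution (T₀ T₁ : ℝ) (w : ℝ → ℤ → ℝ) : Prop :=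
  ∃ δ' > (0 : ℝ), ∃ a b c : ℤ → ℝ → ℝ,
    (∀ j : ℤ, ContinuousOn (a j) (Set.Icc T₀ T₁) ∧ ContinuousOn (b j) (Set.Icc T₀ T₁) ∧
      ContinuousOn (c j) (Set.Icc T₀ T₁)) ∧
    (∃ C : ℝ, ∀ j : ℤ, ∀ t ∈ Set.Icc T₀ T₁, |a j t| ≤ C ∧ |b j t| ≤ C ∧ |c j t| ≤ C) ∧
    (∀ j : ℤ, ∀ t ∈ Set.Icc T₀ T₁, δ' ≤ a j t ∧ δ' ≤ b j t) ∧
    (∀ j : ℤ, ∀ t ∈ Set.Icc T₀ T₁, HasDerivWithinAt (fun s => w s j)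
      (a j t * w t (j - 1) + b j t * w t (j + 1) + c j t * w t j) (Set.Icc T₀ T₁) t) ∧
    (∀ t ∈ Set.Icc T₀ T₁, SubExp (w t))




noncomputable def pd (V : ℝ → ℝ → ℝ) (v : ℝ × ℝ) (p : ℝ × ℝ) : ℝ :=
  fderiv ℝ (Function.uncurry V) p v

noncomputable def sd (V : ℝ → ℝ → ℝ) (p : ℝ × ℝ) (v w : ℝ × ℝ) : ℝ :=
  fderiv ℝ (fderiv ℝ (Function.uncurry V)) p v w

section basic
variable {V : ℝ → ℝ → ℝ} (hV : ContDiff ℝ 2 (Function.uncurry V))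

include hV

lemma hasDerivAt_fst (x y : ℝ) :
    HasDerivAt (fun s => V s y) (pd V (1,0) (x,y)) x := by
  have h1 : HasFDerivAt (Function.uncurry V) (fderiv ℝ (Function.uncurry V) (x,y)) (x,y) :=
    ((hV.differentiable (by norm_num)) (x,y)).hasFDerivAt
  have h2 : HasDerivAt (fun s : ℝ => ((s, y) : ℝ × ℝ)) ((1:ℝ), (0:ℝ)) x :=
    (hasDerivAt_id x).prodMk (hasDerivAt_const x y)
  exact h1.comp_hasDerivAt x h2

lemma hasDerivAt_snd (x y : ℝ) :
    HasDerivAt (fun s => V x s) (pd V (0,1) (x,y)) y := by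
  have h1 : HasFDerivAt (Function.uncurry V) (fderiv ℝ (Function.uncurry V) (x,y)) (x,y) :=
    ((hV.differentiable (by norm_num)) (x,y)).hasFDerivAt
  have h2 : HasDerivAt (fun s : ℝ => ((x, s) : ℝ × ℝ)) ((0:ℝ), (1:ℝ)) y :=
    (hasDerivAt_const y x).prodMk (hasDerivAt_id y)
  exact h1.comp_hasDerivAt y h2

lemma V1_eq (x y : ℝ) : V1 V x y = pd V (1,0) (x,y) := (hasDerivAt_fst hV x y).deriv

lemma V2_eq (x y : ℝ) : V2 V x y = pd V (0,1) (x,y) := (hasDerivAt_snd hV x y).deriv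

lemma contDiff_pd (v : ℝ × ℝ) : ContDiff ℝ 1 (pd V v) :=
  (hV.fderiv_right (by norm_num)).clm_apply contDiff_const

lemma continuous_sd (v w : ℝ × ℝ) : Continuous fun p => sd V p v w := by
  have h1 : ContDiff ℝ 1 (fderiv ℝ (Function.uncurry V)) := hV.fderiv_right (by norm_num)
  have h2 : Continuous (fderiv ℝ (fderiv ℝ (Function.uncurry V))) :=
    (h1.fderiv_right (m := 0) (by norm_num)).continuous
  exact (h2.clm_apply continuous_const).clm_apply continuous_const

lemma fderiv_pd (v : ℝ × ℝ) (p : ℝ × ℝ) (w : ℝ × ℝ) :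
    fderiv ℝ (pd V v) p w = sd V p w v := by
  have h1 : ContDiff ℝ 1 (fderiv ℝ (Function.uncurry V)) := hV.fderiv_right (by norm_num)
  have h2 : HasFDerivAt (fderiv ℝ (Function.uncurry V))
      (fderiv ℝ (fderiv ℝ (Function.uncurry V)) p) p :=
    ((h1.differentiable one_ne_zero) p).hasFDerivAt
  have h3 : HasFDerivAt (pd V v)
      (((ContinuousLinearMap.apply ℝ ℝ v).comp
        (fderiv ℝ (fderiv ℝ (Function.uncurry V)) p))) p :=
    (ContinuousLinearMap.apply ℝ ℝ v).hasFDerivAt.comp p h2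
  rw [h3.fderiv]
  rfl

lemma sd_symm (p : ℝ × ℝ) (v w : ℝ × ℝ) : sd V p v w = sd V p w v := by
  have h1 : ContDiff ℝ 1 (fderiv ℝ (Function.uncurry V)) := hV.fderiv_right (by norm_num)
  exact second_derivative_symmetric
    (fun y => ((hV.differentiable (by norm_num)) y).hasFDerivAt)
    ((h1.differentiable one_ne_zero p).hasFDerivAt) v w

lemma V12_eq (x y : ℝ) : V12 V x y = sd V (x,y) (1,0) (0,1) := by
  have hfun : (fun s => V2 V s y) = fun s => pd V (0,1) (s, y) := by
    funext s; exact V2_eq hV s y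
  have h1 : HasFDerivAt (pd V (0,1)) (fderiv ℝ (pd V (0,1)) (x,y)) (x,y) :=
    (((contDiff_pd hV (0,1)).differentiable one_ne_zero) (x,y)).hasFDerivAt
  have h2 : HasDerivAt (fun s : ℝ => ((s, y) : ℝ × ℝ)) ((1:ℝ), (0:ℝ)) x :=
    (hasDerivAt_id x).prodMk (hasDerivAt_const x y)
  have h3 : HasDerivAt (fun s => pd V (0,1) (s, y)) (fderiv ℝ (pd V (0,1)) (x,y) (1,0)) x := by
    have := h1.comp_hasDerivAt x h2; exact this
  rw [V12, hfun, h3.deriv, fderiv_pd hV]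

end basic
open Set Filter Topology

section per
variable {E F : Type*} [NormedAddCommGroup E] [NormedSpace ℝ E]
  [NormedAddCommGroup F] [NormedSpace ℝ F]

lemma fderiv_periodic {g : E → F} (hg : Differentiable ℝ g) {c : E}
    (hp : ∀ p, g (p + c) = g p) (p : E) : fderiv ℝ g (p + c) = fderiv ℝ g p := by
  have h2 : HasFDerivAt (fun x : E => x + c) (ContinuousLinearMap.id ℝ E) p :=
    (hasFDerivAt_id p).add_const c
  have h3 : HasFDerivAt (fun x => g (x + c)) ((fderiv ℝ g (p + c)).comp
      (ContinuousLinearMap.id ℝ E)) p := ((hg (p + c)).hasFDerivAt).comp p h2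
  have h4 : (fun x => g (x + c)) = g := funext hp
  rw [h4] at h3
  have h5 := h3.fderiv
  rw [ContinuousLinearMap.comp_id] at h5
  exact h5.symm

lemma periodic_int {h : E → ℝ} {c : E} (hp : ∀ p, h (p + c) = h p) :
    ∀ (k : ℤ) (p : E), h (p + k • c) = h p := by
  intro k
  induction k using Int.induction_on with
  | zero => simp
  | succ k ih =>
      intro p
      have e2 : p + ((k:ℤ)+1) • c = (p + (k:ℤ) • c) + c := by push_cast; module
      rw [e2, hp, ih]
  | pred k ih =>
      intro p
      have e2 : p + (-(k:ℤ) - 1) • c + c = p + (-(k:ℤ)) • c := by push_cast; module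
      have e1 := hp (p + (-(k:ℤ) - 1) • c)
      rw [e2] at e1
      rw [← e1, ih]
end per

lemma bounded_on_strip {h : ℝ × ℝ → ℝ} (hc : Continuous h)
    (hp : ∀ p, h (p + ((1:ℝ),(1:ℝ))) = h p) (n : ℕ) :
    ∃ C : ℝ, 0 ≤ C ∧ ∀ p : ℝ × ℝ, |p.2 - p.1| ≤ n → |h p| ≤ C := by
  have hK : IsCompact ((Icc (0:ℝ) 1) ×ˢ (Icc (-(n:ℝ)-1) ((n:ℝ)+1))) :=
    isCompact_Icc.prod isCompact_Icc
  obtain ⟨C, hC⟩ := hK.exists_bound_of_continuousOn hc.continuousOn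
  refine ⟨max C 0, le_max_right _ _, fun p hmem => ?_⟩
  set k : ℤ := ⌊p.1⌋ with hk
  have h1 : h p = h (p + (-k) • ((1:ℝ),(1:ℝ))) := (periodic_int hp (-k) p).symm
  rw [h1]
  have h2 := Int.floor_le p.1
  have h3 := Int.lt_floor_add_one p.1
  have h4 := abs_le.1 hmem
  have hqe : p + (-k) • ((1:ℝ),(1:ℝ)) = (p.1 - (k:ℝ), p.2 - (k:ℝ)) := by
    apply Prod.ext <;>
      simp [Prod.smul_fst, Prod.smul_snd] <;> push_cast <;> ring
  have hq : (p + (-k) • ((1:ℝ),(1:ℝ))) ∈ (Icc (0:ℝ) 1) ×ˢ (Icc (-(n:ℝ)-1) ((n:ℝ)+1)) := by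
    rw [hqe]
    constructor
    · simp only [mem_Icc, hk]; constructor <;> linarith
    · simp only [mem_Icc, hk]; constructor <;> [linarith [h4.1]; linarith [h4.2]]
  calc |h _| ≤ C := hC _ hq
    _ ≤ max C 0 := le_max_left _ _

lemma interp_in_strip {p q : ℝ × ℝ} {n : ℕ} (hp : |p.2 - p.1| ≤ (n:ℝ))
    (hq : |q.2 - q.1| ≤ (n:ℝ)) {s : ℝ} (hs : s ∈ Icc (0:ℝ) 1) :
    |(p + s • (q - p)).2 - (p + s • (q - p)).1| ≤ (n:ℝ) := by
  simp only [Prod.snd_add, Prod.fst_add, Prod.smul_snd, Prod.smul_fst, Prod.snd_sub,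
    Prod.fst_sub, smul_eq_mul]
  have h1 : 0 ≤ 1 - s := by linarith [hs.2]
  have key : p.2 + s * (q.2 - p.2) - (p.1 + s * (q.1 - p.1))
      = (1 - s) * (p.2 - p.1) + s * (q.2 - q.1) := by ring
  rw [key]
  calc |(1 - s) * (p.2 - p.1) + s * (q.2 - q.1)|
      ≤ |(1 - s) * (p.2 - p.1)| + |s * (q.2 - q.1)| := abs_add_le _ _
    _ = (1 - s) * |p.2 - p.1| + s * |q.2 - q.1| := by
        rw [abs_mul, abs_mul, abs_of_nonneg h1, abs_of_nonneg hs.1]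
    _ ≤ (1 - s) * n + s * n :=
        add_le_add (mul_le_mul_of_nonneg_left hp h1) (mul_le_mul_of_nonneg_left hq hs.1)
    _ = n := by ring

section ftc
variable {g : ℝ × ℝ → ℝ} (hg : ContDiff ℝ 1 g)

include hg

lemma cont_along (p q : ℝ × ℝ) (v : ℝ × ℝ) :
    Continuous fun s : ℝ => fderiv ℝ g (p + s • (q - p)) v := by
  have h1 : Continuous (fderiv ℝ g) := (hg.fderiv_right (m := 0) (by norm_num)).continuous
  have h2 : Continuous fun s : ℝ => p + s • (q - p) := by continuity
  exact ((h1.comp h2).clm_apply continuous_const)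

lemma segment_eq (p q : ℝ × ℝ) :
    g q - g p = (∫ s in (0:ℝ)..1, fderiv ℝ g (p + s • (q - p)) (1,0)) * (q.1 - p.1)
      + (∫ s in (0:ℝ)..1, fderiv ℝ g (p + s • (q - p)) (0,1)) * (q.2 - p.2) := by
  set ℓ : ℝ → ℝ × ℝ := fun s => p + s • (q - p) with hℓ
  have hline : ∀ s : ℝ, HasDerivAt ℓ (q - p) s := by
    intro s
    have : HasDerivAt (fun s : ℝ => s • (q - p)) ((1:ℝ) • (q - p)) s :=
      (hasDerivAt_id s).smul_const (q - p)
    simpa [hℓ] using this.const_add p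
  have hφ : ∀ s : ℝ, HasDerivAt (fun s => g (ℓ s)) (fderiv ℝ g (ℓ s) (q - p)) s := by
    intro s
    exact (((hg.differentiable one_ne_zero) (ℓ s)).hasFDerivAt).comp_hasDerivAt s (hline s)
  have hint : IntervalIntegrable (fun s => fderiv ℝ g (ℓ s) (q - p)) MeasureTheory.volume 0 1 :=
    (cont_along hg p q (q - p)).intervalIntegrable 0 1
  have h0 : g q - g p = ∫ s in (0:ℝ)..1, fderiv ℝ g (ℓ s) (q - p) := by
    have := intervalIntegral.integral_eq_sub_of_hasDerivAt (fun s _ => hφ s) hint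
    rw [this]
    have e1 : ℓ 1 = q := by simp [hℓ]
    have e0 : ℓ 0 = p := by simp [hℓ]
    rw [e1, e0]
  rw [h0]
  have hsplit : ∀ s : ℝ, fderiv ℝ g (ℓ s) (q - p)
      = fderiv ℝ g (ℓ s) (1,0) * (q.1 - p.1) + fderiv ℝ g (ℓ s) (0,1) * (q.2 - p.2) := by
    intro s
    have e : (q - p) = (q.1 - p.1) • ((1:ℝ),(0:ℝ)) + (q.2 - p.2) • ((0:ℝ),(1:ℝ)) := by
      apply Prod.ext <;> simp
    rw [e, map_add, map_smul, map_smul, smul_eq_mul, smul_eq_mul]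
    ring
  rw [intervalIntegral.integral_congr (g := fun s =>
      fderiv ℝ g (ℓ s) (1,0) * (q.1 - p.1) + fderiv ℝ g (ℓ s) (0,1) * (q.2 - p.2))
      (fun s _ => hsplit s)]
  rw [intervalIntegral.integral_add
      (f := fun s => fderiv ℝ g (p + s • (q - p)) (1,0) * (q.1 - p.1))
      (g := fun s => fderiv ℝ g (p + s • (q - p)) (0,1) * (q.2 - p.2))
      (((cont_along hg p q (1,0)).mul continuous_const).intervalIntegrable 0 1)
      (((cont_along hg p q (0,1)).mul continuous_const).intervalIntegrable 0 1),
    intervalIntegral.integral_mul_const, intervalIntegral.integral_mul_const]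

end ftc

/-- coefficient as an integral of the second derivative along a segment -/
noncomputable def coef (V : ℝ → ℝ → ℝ) (v w : ℝ × ℝ) (pq : (ℝ × ℝ) × (ℝ × ℝ)) : ℝ :=
  ∫ s in (0:ℝ)..1, sd V (pq.1 + s • (pq.2 - pq.1)) v w

section coefsec
variable {V : ℝ → ℝ → ℝ} (hV : ContDiff ℝ 2 (Function.uncurry V))
include hV

lemma continuous_coef (v w : ℝ × ℝ) : Continuous (coef V v w) := by
  apply intervalIntegral.continuous_parametric_intervalIntegral_of_continuous'
    (μ := MeasureTheory.volume)
    (f := fun (pq : (ℝ × ℝ) × (ℝ × ℝ)) (s : ℝ) => sd V (pq.1 + s • (pq.2 - pq.1)) v w)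
  have h2 : Continuous fun z : ((ℝ × ℝ) × (ℝ × ℝ)) × ℝ =>
      z.1.1 + z.2 • (z.1.2 - z.1.1) := by fun_prop
  exact (continuous_sd hV v w).comp h2

lemma segment_eq_pd (v : ℝ × ℝ) (p q : ℝ × ℝ) :
    pd V v q - pd V v p = coef V (1,0) v (p, q) * (q.1 - p.1)
      + coef V (0,1) v (p, q) * (q.2 - p.2) := by
  have h := segment_eq (contDiff_pd hV v) p q
  have e : ∀ u : ℝ × ℝ, (fun s : ℝ => fderiv ℝ (pd V v) (p + s • (q - p)) u)
      = fun s : ℝ => sd V (p + s • (q - p)) u v := by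
    intro u; funext s; exact fderiv_pd hV v _ u
  rw [h, coef, coef]
  simp only [e]

lemma coef_bound {n : ℕ} {C : ℝ} (hC0 : 0 ≤ C)
    (hC : ∀ p : ℝ × ℝ, |p.2 - p.1| ≤ (n:ℝ) → |sd V p (1,0) (0,1)| ≤ C ∧
      |sd V p (0,1) (0,1)| ≤ C ∧ |sd V p (1,0) (1,0)| ≤ C ∧ |sd V p (0,1) (1,0)| ≤ C)
    (v w : ℝ × ℝ) (hv : v = (1,0) ∨ v = (0,1)) (hw : w = (1,0) ∨ w = (0,1))
    {p q : ℝ × ℝ} (hp : |p.2 - p.1| ≤ (n:ℝ)) (hq : |q.2 - q.1| ≤ (n:ℝ)) :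
    |coef V v w (p, q)| ≤ C := by
  have key : ∀ s ∈ Set.uIoc (0:ℝ) 1, ‖sd V (p + s • (q - p)) v w‖ ≤ C := by
    intro s hs
    have hs' : s ∈ Icc (0:ℝ) 1 := by
      rw [Set.uIoc_of_le (by norm_num : (0:ℝ) ≤ 1)] at hs
      exact ⟨le_of_lt hs.1, hs.2⟩
    have hstrip := interp_in_strip hp hq hs'
    have := hC _ hstrip
    rcases hv with rfl | rfl <;> rcases hw with rfl | rfl <;>
      simp only [Real.norm_eq_abs] <;> tauto
  have := intervalIntegral.norm_integral_le_of_norm_le_const key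
  simpa [coef] using this

lemma coef_lower {δ : ℝ} (htw : ∀ p : ℝ × ℝ, sd V p (1,0) (0,1) ≤ -δ)
    (v w : ℝ × ℝ) (hvw : (v = (1,0) ∧ w = (0,1)) ∨ (v = (0,1) ∧ w = (1,0)))
    (p q : ℝ × ℝ) : δ ≤ -(coef V v w (p, q)) := by
  have htw' : ∀ r : ℝ × ℝ, sd V r v w ≤ -δ := by
    rcases hvw with ⟨rfl, rfl⟩ | ⟨rfl, rfl⟩
    · exact htw
    · intro r; rw [sd_symm hV]; exact htw r
  have hle : coef V v w (p, q) ≤ -δ := by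
    have h1 : IntervalIntegrable (fun s : ℝ => sd V (p + s • (q - p)) v w)
        MeasureTheory.volume 0 1 := by
      apply Continuous.intervalIntegrable
      have h2 : Continuous fun s : ℝ => p + s • (q - p) := by continuity
      exact (continuous_sd hV v w).comp h2
    calc coef V v w (p, q) ≤ ∫ _ in (0:ℝ)..1, (-δ) :=
          intervalIntegral.integral_mono_on (by norm_num) h1
            intervalIntegrable_const (fun s _ => htw' _)
      _ = -δ := by simp
  linarith

end coefsec

/-- sub-exponential growth from a linear bound -/
lemma subExp_of_linear {w : ℤ → ℝ} {A B : ℝ}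
    (h : ∀ j : ℤ, |w j| ≤ A + B * |(j:ℝ)|) :
    ∀ ε : ℝ, 0 < ε → ∀ᶠ j in (Filter.cofinite : Filter ℤ), Real.log |w j| ≤ ε * |(j : ℝ)| := by
  intro ε hε
  rw [Filter.eventually_cofinite]
  set M : ℝ := max 1 (4 * (|A| + |B| + 1) / (ε^2)) with hM
  apply Set.Finite.subset (Set.finite_Icc (-(⌈M⌉₊ : ℤ)) (⌈M⌉₊ : ℤ))
  intro j hj
  simp only [Set.mem_setOf_eq, not_le] at hj
  by_contra hmem
  simp only [Set.mem_Icc, not_and_or, not_le] at hmem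
  -- then |(j:ℝ)| ≥ M
  have hjM : M ≤ |(j:ℝ)| := by
    have hMle : M ≤ (⌈M⌉₊ : ℝ) := Nat.le_ceil M
    rcases hmem with h1 | h1
    · have : (j:ℝ) < -(⌈M⌉₊ : ℝ) := by exact_mod_cast h1
      rw [abs_of_nonpos (by linarith)]
      linarith
    · have : (⌈M⌉₊ : ℝ) < (j:ℝ) := by exact_mod_cast h1
      rw [abs_of_nonneg (by linarith)]
      linarith
  set x : ℝ := |(j:ℝ)| with hx
  have hx1 : 1 ≤ x := le_trans (le_max_left _ _) hjM
  have hx2 : 4 * (|A| + |B| + 1) / (ε^2) ≤ x := le_trans (le_max_right _ _) hjM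
  have hx0 : 0 ≤ x := by linarith
  -- A + B * x ≤ exp (ε x)
  have key : A + B * x ≤ Real.exp (ε * x) := by
    have h1 : (1 + ε * x / 2)^2 ≤ Real.exp (ε * x) := by
      have h2 : Real.exp (ε * x) = (Real.exp (ε * x / 2))^2 := by
        rw [← Real.exp_nat_mul]; ring_nf
      rw [h2]
      have h4 : 0 ≤ 1 + ε * x / 2 := by positivity
      exact pow_le_pow_left₀ h4 (by linarith [Real.add_one_le_exp (ε * x / 2)]) 2
    have h5 : A + B * x ≤ (1 + ε * x / 2)^2 := by
      have e1 : (1 + ε * x / 2)^2 = 1 + ε * x + (ε^2 / 4) * x^2 := by ring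
      rw [e1]
      have h6 : (ε^2 / 4) * x^2 ≥ (|A| + |B| + 1) * x := by
        have : (ε^2/4) * x ≥ (|A| + |B| + 1) := by
          rw [ge_iff_le, ← div_le_iff₀' (by positivity)]
          calc (|A| + |B| + 1) / (ε^2/4) = 4 * (|A| + |B| + 1) / ε^2 := by ring
            _ ≤ x := hx2
        calc (ε^2/4) * x^2 = ((ε^2/4) * x) * x := by ring
          _ ≥ (|A| + |B| + 1) * x := by
              apply mul_le_mul_of_nonneg_right this hx0
      have hA : A ≤ |A| * x := by
        calc A ≤ |A| := le_abs_self A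
          _ ≤ |A| * x := le_mul_of_one_le_right (abs_nonneg A) hx1
      have hB : B * x ≤ |B| * x := mul_le_mul_of_nonneg_right (le_abs_self B) hx0
      nlinarith [mul_pos hε (lt_of_lt_of_le one_pos hx1), abs_nonneg A, abs_nonneg B]
    linarith
  have habs : |w j| ≤ Real.exp (ε * x) := le_trans (h j) key
  have hlog : Real.log |w j| ≤ ε * x := by
    rcases le_or_gt (|w j|) 1 with h1 | h1
    · calc Real.log |w j| ≤ 0 := Real.log_nonpos (abs_nonneg _) h1
        _ ≤ ε * x := by positivity
    · calc Real.log |w j| ≤ Real.log (Real.exp (ε * x)) :=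
          Real.log_le_log (by linarith) habs
        _ = ε * x := Real.log_exp _
  linarith

lemma kn_growth {n : ℕ} {u : ℤ → ℝ} (hu : u ∈ Kn n) (j : ℤ) :
    |u j - u 0| ≤ (n : ℝ) * |(j : ℝ)| := by
  induction j using Int.induction_on with
  | zero => simp
  | succ k ih =>
      have h1 := hu (k : ℤ)
      calc |u ((k:ℤ)+1) - u 0| ≤ |u ((k:ℤ)+1) - u (k:ℤ)| + |u (k:ℤ) - u 0| := by
            have := abs_add_le (u ((k:ℤ)+1) - u (k:ℤ)) (u (k:ℤ) - u 0)
            simpa using this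
        _ ≤ (n:ℝ) + (n:ℝ) * |((k:ℤ):ℝ)| := add_le_add h1 ih
        _ ≤ (n:ℝ) * |(((k:ℤ)+1 : ℤ):ℝ)| := by
            push_cast
            rw [abs_of_nonneg (by positivity : (0:ℝ) ≤ (k:ℝ)), abs_of_nonneg
              (by positivity : (0:ℝ) ≤ (k:ℝ)+1)]
            ring_nf
            nlinarith [Nat.cast_nonneg (α := ℝ) k, Nat.cast_nonneg (α := ℝ) n]
  | pred k ih =>
      have h1 := hu (-(k:ℤ)-1)
      have h1' : |u (-(k:ℤ)) - u (-(k:ℤ)-1)| ≤ (n:ℝ) := by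
        have e : (-(k:ℤ)-1) + 1 = -(k:ℤ) := by ring
        rwa [e] at h1
      calc |u (-(k:ℤ)-1) - u 0| ≤ |u (-(k:ℤ)) - u (-(k:ℤ)-1)| + |u (-(k:ℤ)) - u 0| := by
            have := abs_add_le (u (-(k:ℤ)-1) - u (-(k:ℤ))) (u (-(k:ℤ)) - u 0)
            rw [abs_sub_comm (u (-(k:ℤ)-1)) (u (-(k:ℤ)))] at this
            simpa using this
        _ ≤ (n:ℝ) + (n:ℝ) * |((-(k:ℤ):ℤ):ℝ)| := add_le_add h1' ih
        _ ≤ (n:ℝ) * |((-(k:ℤ)-1 : ℤ):ℝ)| := by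
            have e1 : |((-(k:ℤ):ℤ):ℝ)| = (k:ℝ) := by
              push_cast
              rw [abs_neg, abs_of_nonneg (Nat.cast_nonneg k)]
            have e2 : |((-(k:ℤ)-1 : ℤ):ℝ)| = (k:ℝ) + 1 := by
              push_cast
              rw [show -(k:ℝ) - 1 = -((k:ℝ)+1) by ring, abs_neg,
                abs_of_nonneg (by positivity)]
            rw [e1, e2]
            nlinarith [Nat.cast_nonneg (α := ℝ) n, Nat.cast_nonneg (α := ℝ) k]

section mainparts
variable {δ : ℝ} (hδ : 0 < δ) {V : ℝ → ℝ → ℝ} {F : ℝ → ℝ}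
  (hV : ContDiff ℝ 2 (Function.uncurry V))
  (hper : ∀ x y : ℝ, V (x + 1) (y + 1) = V x y)
  (htwist : ∀ x y : ℝ, V12 V x y ≤ -δ)

-- periodicity of uncurry V
lemma per_f (hper : ∀ x y : ℝ, V (x + 1) (y + 1) = V x y) (p : ℝ × ℝ) :
    Function.uncurry V (p + ((1:ℝ),(1:ℝ))) = Function.uncurry V p := hper p.1 p.2

include hV hper in
lemma per_sd (v w : ℝ × ℝ) (p : ℝ × ℝ) :
    sd V (p + ((1:ℝ),(1:ℝ))) v w = sd V p v w := by
  have h1 : ∀ q, fderiv ℝ (Function.uncurry V) (q + ((1:ℝ),(1:ℝ)))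
      = fderiv ℝ (Function.uncurry V) q :=
    fderiv_periodic (hV.differentiable (by norm_num)) (per_f hper)
  have h2 : fderiv ℝ (fderiv ℝ (Function.uncurry V)) (p + ((1:ℝ),(1:ℝ)))
      = fderiv ℝ (fderiv ℝ (Function.uncurry V)) p :=
    fderiv_periodic ((hV.fderiv_right (m := 1) (by norm_num)).differentiable one_ne_zero) h1 p
  rw [sd, sd, h2]

include hV hper in
lemma per_pd (v : ℝ × ℝ) (p : ℝ × ℝ) :
    pd V v (p + ((1:ℝ),(1:ℝ))) = pd V v p := by
  have h1 : ∀ q, fderiv ℝ (Function.uncurry V) (q + ((1:ℝ),(1:ℝ)))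
      = fderiv ℝ (Function.uncurry V) q :=
    fderiv_periodic (hV.differentiable (by norm_num)) (per_f hper)
  rw [pd, pd, h1]

include hV htwist in
lemma sd_twist (p : ℝ × ℝ) : sd V p (1,0) (0,1) ≤ -δ := by
  have := htwist p.1 p.2
  rwa [V12_eq hV] at this

include hV hper in
/-- combined strip bound for the four second derivatives -/
lemma strip_bound (n : ℕ) : ∃ C : ℝ, 0 ≤ C ∧ ∀ p : ℝ × ℝ, |p.2 - p.1| ≤ (n:ℝ) →
    |sd V p (1,0) (0,1)| ≤ C ∧ |sd V p (0,1) (0,1)| ≤ C ∧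
    |sd V p (1,0) (1,0)| ≤ C ∧ |sd V p (0,1) (1,0)| ≤ C := by
  obtain ⟨C1, hC1n, hC1⟩ := bounded_on_strip (continuous_sd hV (1,0) (0,1))
    (per_sd hV hper (1,0) (0,1)) n
  obtain ⟨C2, hC2n, hC2⟩ := bounded_on_strip (continuous_sd hV (0,1) (0,1))
    (per_sd hV hper (0,1) (0,1)) n
  obtain ⟨C3, hC3n, hC3⟩ := bounded_on_strip (continuous_sd hV (1,0) (1,0))
    (per_sd hV hper (1,0) (1,0)) n
  obtain ⟨C4, hC4n, hC4⟩ := bounded_on_strip (continuous_sd hV (0,1) (1,0))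
    (per_sd hV hper (0,1) (1,0)) n
  refine ⟨max (max C1 C2) (max C3 C4), by positivity, fun p hp => ?_⟩
  refine ⟨le_trans (hC1 p hp) ?_, le_trans (hC2 p hp) ?_,
    le_trans (hC3 p hp) ?_, le_trans (hC4 p hp) ?_⟩
  · exact le_max_of_le_left (le_max_left _ _)
  · exact le_max_of_le_left (le_max_right _ _)
  · exact le_max_of_le_right (le_max_left _ _)
  · exact le_max_of_le_right (le_max_right _ _)

include hδ hV hper htwist in
lemma coop_part1 (n : ℕ) (T₀ T₁ : ℝ)
    (u₁ u₂ : ℝ → ℤ → ℝ)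
    (hu₁K : ∀ t ∈ Set.Icc T₀ T₁, u₁ t ∈ Kn n)
    (hu₂K : ∀ t ∈ Set.Icc T₀ T₁, u₂ t ∈ Kn n)
    (hu₁ : SolvesFK V F (Set.Icc T₀ T₁) u₁)
    (hu₂ : SolvesFK V F (Set.Icc T₀ T₁) u₂) :
    IsCoopSolution T₀ T₁ (fun t j => u₂ t j - u₁ t j) := by
  obtain ⟨C, hC0, hC⟩ := strip_bound hV hper n
  -- pairs
  set P1 : ℤ → ℝ → (ℝ × ℝ) × (ℝ × ℝ) :=
    fun j t => ((u₁ t (j-1), u₁ t j), (u₂ t (j-1), u₂ t j)) with hP1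
  set P2 : ℤ → ℝ → (ℝ × ℝ) × (ℝ × ℝ) :=
    fun j t => ((u₁ t j, u₁ t (j+1)), (u₂ t j, u₂ t (j+1))) with hP2
  refine ⟨δ, hδ,
    (fun j t => -(coef V (1,0) (0,1) (P1 j t))),
    (fun j t => -(coef V (0,1) (1,0) (P2 j t))),
    (fun j t => -(coef V (0,1) (0,1) (P1 j t)) - coef V (1,0) (1,0) (P2 j t)),
    ?_, ?_, ?_, ?_, ?_⟩
  · -- continuity
    intro j
    have hcont : ∀ k : ℤ, ∀ u : ℝ → ℤ → ℝ, SolvesFK V F (Set.Icc T₀ T₁) u →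
        ContinuousOn (fun t => u t k) (Set.Icc T₀ T₁) :=
      fun k u hu t ht => (hu k t ht).continuousWithinAt
    have h1 : ContinuousOn (P1 j) (Set.Icc T₀ T₁) :=
      ((hcont _ _ hu₁).prodMk (hcont _ _ hu₁)).prodMk ((hcont _ _ hu₂).prodMk (hcont _ _ hu₂))
    have h2 : ContinuousOn (P2 j) (Set.Icc T₀ T₁) :=
      ((hcont _ _ hu₁).prodMk (hcont _ _ hu₁)).prodMk ((hcont _ _ hu₂).prodMk (hcont _ _ hu₂))
    exact ⟨(((continuous_coef hV (1,0) (0,1)).comp_continuousOn h1)).neg,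
      (((continuous_coef hV (0,1) (1,0)).comp_continuousOn h2)).neg,
      ((((continuous_coef hV (0,1) (0,1)).comp_continuousOn h1)).neg).sub
        ((continuous_coef hV (1,0) (1,0)).comp_continuousOn h2)⟩
  · -- bounds
    refine ⟨2 * C, fun j t ht => ?_⟩
    have hs1 : |(u₁ t (j-1), u₁ t j).2 - (u₁ t (j-1), u₁ t j).1| ≤ (n:ℝ) := by
      simpa using (hu₁K t ht) (j-1)
    have hs2 : |(u₂ t (j-1), u₂ t j).2 - (u₂ t (j-1), u₂ t j).1| ≤ (n:ℝ) := by
      simpa using (hu₂K t ht) (j-1)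
    have hs3 : |(u₁ t j, u₁ t (j+1)).2 - (u₁ t j, u₁ t (j+1)).1| ≤ (n:ℝ) := by
      simpa using (hu₁K t ht) j
    have hs4 : |(u₂ t j, u₂ t (j+1)).2 - (u₂ t j, u₂ t (j+1)).1| ≤ (n:ℝ) := by
      simpa using (hu₂K t ht) j
    have b1 := coef_bound hV hC0 hC (1,0) (0,1) (Or.inl rfl) (Or.inr rfl) hs1 hs2
    have b2 := coef_bound hV hC0 hC (0,1) (1,0) (Or.inr rfl) (Or.inl rfl) hs3 hs4
    have b3 := coef_bound hV hC0 hC (0,1) (0,1) (Or.inr rfl) (Or.inr rfl) hs1 hs2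
    have b4 := coef_bound hV hC0 hC (1,0) (1,0) (Or.inl rfl) (Or.inl rfl) hs3 hs4
    refine ⟨?_, ?_, ?_⟩
    · rw [abs_neg]; linarith
    · rw [abs_neg]; linarith
    · calc |(-(coef V (0,1) (0,1) (P1 j t))) - coef V (1,0) (1,0) (P2 j t)|
          ≤ |(-(coef V (0,1) (0,1) (P1 j t)))| + |coef V (1,0) (1,0) (P2 j t)| :=
            abs_sub _ _
        _ ≤ 2 * C := by rw [abs_neg]; linarith
  · -- lower bounds
    intro j t ht
    constructor
    · exact coef_lower hV (sd_twist hV htwist) (1,0) (0,1) (Or.inl ⟨rfl, rfl⟩) _ _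
    · exact coef_lower hV (sd_twist hV htwist) (0,1) (1,0) (Or.inr ⟨rfl, rfl⟩) _ _
  · -- derivative
    intro j t ht
    have h2 := (hu₂ j t ht).sub (hu₁ j t ht)
    have e1 := segment_eq_pd hV (0,1) (u₁ t (j-1), u₁ t j) (u₂ t (j-1), u₂ t j)
    have e2 := segment_eq_pd hV (1,0) (u₁ t j, u₁ t (j+1)) (u₂ t j, u₂ t (j+1))
    dsimp only at e1 e2
    have heq : (-(coef V (1,0) (0,1) (P1 j t))) * (u₂ t (j-1) - u₁ t (j-1))
        + (-(coef V (0,1) (1,0) (P2 j t))) * (u₂ t (j+1) - u₁ t (j+1))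
        + ((-(coef V (0,1) (0,1) (P1 j t))) - coef V (1,0) (1,0) (P2 j t)) * (u₂ t j - u₁ t j)
        = (-(V2 V (u₂ t (j - 1)) (u₂ t j)) - V1 V (u₂ t j) (u₂ t (j + 1)) + F t)
        - (-(V2 V (u₁ t (j - 1)) (u₁ t j)) - V1 V (u₁ t j) (u₁ t (j + 1)) + F t) := by
      rw [V2_eq hV, V2_eq hV, V1_eq hV, V1_eq hV, hP1, hP2]
      dsimp only
      linarith [e1, e2]
    exact heq ▸ h2
  · -- subexponential
    intro t ht
    have b1 := kn_growth (hu₁K t ht)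
    have b2 := kn_growth (hu₂K t ht)
    intro ε hε
    apply subExp_of_linear (A := |u₂ t 0 - u₁ t 0|) (B := 2 * n) _ ε hε
    intro j
    have := abs_sub_abs_le_abs_sub (u₂ t j - u₁ t j) (u₂ t 0 - u₁ t 0)
    calc |u₂ t j - u₁ t j|
        ≤ |u₂ t 0 - u₁ t 0| + |(u₂ t j - u₁ t j) - (u₂ t 0 - u₁ t 0)| := by
          have := abs_add_le (u₂ t 0 - u₁ t 0) ((u₂ t j - u₁ t j) - (u₂ t 0 - u₁ t 0))
          simpa using this
      _ ≤ |u₂ t 0 - u₁ t 0| + (|u₂ t j - u₂ t 0| + |u₁ t j - u₁ t 0|) := by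
          have h3 : (u₂ t j - u₁ t j) - (u₂ t 0 - u₁ t 0)
              = (u₂ t j - u₂ t 0) - (u₁ t j - u₁ t 0) := by ring
          rw [h3]
          have := abs_sub (u₂ t j - u₂ t 0) (u₁ t j - u₁ t 0)
          linarith
      _ ≤ |u₂ t 0 - u₁ t 0| + 2 * n * |(j:ℝ)| := by
          have := b1 j; have := b2 j; linarith

end mainparts

section part2
variable {δ : ℝ} (hδ : 0 < δ) {V : ℝ → ℝ → ℝ} {F : ℝ → ℝ}
  (hV : ContDiff ℝ 2 (Function.uncurry V))
  (hper : ∀ x y : ℝ, V (x + 1) (y + 1) = V x y)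
  (htwist : ∀ x y : ℝ, V12 V x y ≤ -δ)

include hV in
lemma fderiv_pd_apply (v p : ℝ × ℝ) (x y : ℝ) :
    fderiv ℝ (pd V v) p (x, y) = x * sd V p (1,0) v + y * sd V p (0,1) v := by
  have e : ((x, y) : ℝ × ℝ) = x • ((1:ℝ),(0:ℝ)) + y • ((0:ℝ),(1:ℝ)) := by
    apply Prod.ext <;> simp
  rw [e, map_add, map_smul, map_smul, fderiv_pd hV, fderiv_pd hV, smul_eq_mul, smul_eq_mul]

include hδ hV hper htwist in
lemma coop_part2 (n : ℕ) (T₀ T₁ : ℝ) (hT : T₀ < T₁)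
    (u : ℝ → ℤ → ℝ) (hFc : ∀ t t' : ℝ, F t = F t')
    (huK : ∀ t ∈ Set.Icc T₀ T₁, u t ∈ Kn n)
    (hu : SolvesFK V F (Set.Icc T₀ T₁) u) :
    IsCoopSolution T₀ T₁ (fun t j => derivWithin (fun s => u s j) (Set.Icc T₀ T₁) t) := by
  obtain ⟨C, hC0, hC⟩ := strip_bound hV hper n
  have hU : UniqueDiffOn ℝ (Set.Icc T₀ T₁) := uniqueDiffOn_Icc hT
  set w : ℤ → ℝ → ℝ := fun j t => derivWithin (fun s => u s j) (Set.Icc T₀ T₁) t with hwdef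
  have hw : ∀ k : ℤ, ∀ t ∈ Set.Icc T₀ T₁,
      HasDerivWithinAt (fun s => u s k) (w k t) (Set.Icc T₀ T₁) t ∧
      w k t = -(pd V (0,1) (u t (k-1), u t k)) - pd V (1,0) (u t k, u t (k+1)) + F T₀ := by
    intro k t ht
    have hd := hu k t ht
    have he : w k t = -(V2 V (u t (k - 1)) (u t k)) - V1 V (u t k) (u t (k + 1)) + F t :=
      hd.derivWithin (hU t ht)
    constructor
    · rw [he]; exact hd
    · rw [he, V2_eq hV, V1_eq hV, hFc t T₀]
  -- strip memberships
  have hs1 : ∀ t ∈ Set.Icc T₀ T₁, ∀ j : ℤ,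
      |(u t (j-1), u t j).2 - (u t (j-1), u t j).1| ≤ (n:ℝ) := by
    intro t ht j; simpa using (huK t ht) (j-1)
  have hs2 : ∀ t ∈ Set.Icc T₀ T₁, ∀ j : ℤ,
      |(u t j, u t (j+1)).2 - (u t j, u t (j+1)).1| ≤ (n:ℝ) := by
    intro t ht j; simpa using (huK t ht) j
  have hcont : ∀ k : ℤ, ContinuousOn (fun t => u t k) (Set.Icc T₀ T₁) :=
    fun k t ht => (hu k t ht).continuousWithinAt
  refine ⟨δ, hδ,
    (fun j t => -(sd V (u t (j-1), u t j) (1,0) (0,1))),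
    (fun j t => -(sd V (u t j, u t (j+1)) (0,1) (1,0))),
    (fun j t => -(sd V (u t (j-1), u t j) (0,1) (0,1)) - sd V (u t j, u t (j+1)) (1,0) (1,0)),
    ?_, ?_, ?_, ?_, ?_⟩
  · intro j
    have h1 : ContinuousOn (fun t => ((u t (j-1), u t j) : ℝ × ℝ)) (Set.Icc T₀ T₁) :=
      (hcont _).prodMk (hcont _)
    have h2 : ContinuousOn (fun t => ((u t j, u t (j+1)) : ℝ × ℝ)) (Set.Icc T₀ T₁) :=
      (hcont _).prodMk (hcont _)
    exact ⟨((continuous_sd hV (1,0) (0,1)).comp_continuousOn h1).neg,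
      ((continuous_sd hV (0,1) (1,0)).comp_continuousOn h2).neg,
      (((continuous_sd hV (0,1) (0,1)).comp_continuousOn h1).neg).sub
        ((continuous_sd hV (1,0) (1,0)).comp_continuousOn h2)⟩
  · refine ⟨2 * C, fun j t ht => ?_⟩
    obtain ⟨c1, c2, c3, c4⟩ := hC _ (hs1 t ht j)
    obtain ⟨d1, d2, d3, d4⟩ := hC _ (hs2 t ht j)
    refine ⟨?_, ?_, ?_⟩
    · rw [abs_neg]; linarith
    · rw [abs_neg]; linarith
    · calc |(-(sd V (u t (j-1), u t j) (0,1) (0,1))) - sd V (u t j, u t (j+1)) (1,0) (1,0)|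
          ≤ |(-(sd V (u t (j-1), u t j) (0,1) (0,1)))| + |sd V (u t j, u t (j+1)) (1,0) (1,0)| :=
            abs_sub _ _
        _ ≤ 2 * C := by rw [abs_neg]; linarith
  · intro j t ht
    refine ⟨?_, ?_⟩ <;> dsimp only
    · have := sd_twist hV htwist (u t (j-1), u t j); linarith
    · have h1 := sd_twist hV htwist (u t j, u t (j+1))
      rw [sd_symm hV] at h1; linarith
  · -- derivative
    intro j t ht
    set G : ℝ → ℝ := fun s =>
      -(pd V (0,1) (u s (j-1), u s j)) - pd V (1,0) (u s j, u s (j+1)) + F T₀ with hG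
    have hdiff : Differentiable ℝ (pd V (0,1)) := (contDiff_pd hV (0,1)).differentiable one_ne_zero
    have hdiff' : Differentiable ℝ (pd V (1,0)) := (contDiff_pd hV (1,0)).differentiable one_ne_zero
    have hpair1 : HasDerivWithinAt (fun s => ((u s (j-1), u s j) : ℝ × ℝ))
        ((w (j-1) t, w j t)) (Set.Icc T₀ T₁) t :=
      ((hw (j-1) t ht).1).prodMk ((hw j t ht).1)
    have hpair2 : HasDerivWithinAt (fun s => ((u s j, u s (j+1)) : ℝ × ℝ))
        ((w j t, w (j+1) t)) (Set.Icc T₀ T₁) t :=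
      ((hw j t ht).1).prodMk ((hw (j+1) t ht).1)
    have hc1 : HasDerivWithinAt (fun s => pd V (0,1) (u s (j-1), u s j))
        (fderiv ℝ (pd V (0,1)) (u t (j-1), u t j) (w (j-1) t, w j t)) (Set.Icc T₀ T₁) t :=
      (hdiff _).hasFDerivAt.comp_hasDerivWithinAt t hpair1
    have hc2 : HasDerivWithinAt (fun s => pd V (1,0) (u s j, u s (j+1)))
        (fderiv ℝ (pd V (1,0)) (u t j, u t (j+1)) (w j t, w (j+1) t)) (Set.Icc T₀ T₁) t :=
      (hdiff' _).hasFDerivAt.comp_hasDerivWithinAt t hpair2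
    have hGd : HasDerivWithinAt G
        (-(fderiv ℝ (pd V (0,1)) (u t (j-1), u t j) (w (j-1) t, w j t))
          - fderiv ℝ (pd V (1,0)) (u t j, u t (j+1)) (w j t, w (j+1) t)) (Set.Icc T₀ T₁) t :=
      ((hc1.neg).sub hc2).add_const (F T₀)
    have hval : -(fderiv ℝ (pd V (0,1)) (u t (j-1), u t j) (w (j-1) t, w j t))
          - fderiv ℝ (pd V (1,0)) (u t j, u t (j+1)) (w j t, w (j+1) t)
        = (-(sd V (u t (j-1), u t j) (1,0) (0,1))) * w (j-1) t
          + (-(sd V (u t j, u t (j+1)) (0,1) (1,0))) * w (j+1) t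
          + ((-(sd V (u t (j-1), u t j) (0,1) (0,1)))
              - sd V (u t j, u t (j+1)) (1,0) (1,0)) * w j t := by
      rw [fderiv_pd_apply hV, fderiv_pd_apply hV]
      ring
    rw [hval] at hGd
    exact hGd.congr (fun s hs => (hw j s hs).2.trans rfl) ((hw j t ht).2.trans rfl)
  · -- subexponential
    intro t ht
    obtain ⟨C1, hC1n, hC1⟩ := bounded_on_strip ((contDiff_pd hV (0,1)).continuous)
      (per_pd hV hper (0,1)) n
    obtain ⟨C2, hC2n, hC2⟩ := bounded_on_strip ((contDiff_pd hV (1,0)).continuous)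
      (per_pd hV hper (1,0)) n
    intro ε hε
    apply subExp_of_linear (A := C1 + C2 + |F T₀|) (B := 0) _ ε hε
    intro j
    have he := (hw j t ht).2
    calc |w j t| = |(-(pd V (0,1) (u t (j-1), u t j)))
          - pd V (1,0) (u t j, u t (j+1)) + F T₀| := by rw [he]
      _ ≤ |(-(pd V (0,1) (u t (j-1), u t j))) - pd V (1,0) (u t j, u t (j+1))| + |F T₀| :=
          abs_add_le _ _
      _ ≤ |(-(pd V (0,1) (u t (j-1), u t j)))| + |pd V (1,0) (u t j, u t (j+1))| + |F T₀| := by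
          have := abs_sub (-(pd V (0,1) (u t (j-1), u t j))) (pd V (1,0) (u t j, u t (j+1)))
          linarith
      _ ≤ C1 + C2 + |F T₀| := by
          rw [abs_neg]
          have h1 := hC1 _ (hs1 t ht j)
          have h2 := hC2 _ (hs2 t ht j)
          linarith
      _ = C1 + C2 + |F T₀| + 0 * |(j:ℝ)| := by ring

end part2

theorem fk_difference_is_cooperative
    (δ : ℝ) (hδ : 0 < δ) (V : ℝ → ℝ → ℝ) (F : ℝ → ℝ)
    (hV : ContDiff ℝ 2 (Function.uncurry V))
    (hper : ∀ x y : ℝ, V (x + 1) (y + 1) = V x y)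
    (htwist : ∀ x y : ℝ, V12 V x y ≤ -δ)
    (hF : Continuous F)
    (n : ℕ) (T₀ T₁ : ℝ) (hT : T₀ < T₁)
    (u₁ u₂ : ℝ → ℤ → ℝ)
    (hu₁K : ∀ t ∈ Set.Icc T₀ T₁, u₁ t ∈ Kn n)
    (hu₂K : ∀ t ∈ Set.Icc T₀ T₁, u₂ t ∈ Kn n)
    (hu₁ : SolvesFK V F (Set.Icc T₀ T₁) u₁)
    (hu₂ : SolvesFK V F (Set.Icc T₀ T₁) u₂) :
    IsCoopSolution T₀ T₁ (fun t j => u₂ t j - u₁ t j) ∧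
    (∀ u : ℝ → ℤ → ℝ, (∀ t t' : ℝ, F t = F t') →
      (∀ t ∈ Set.Icc T₀ T₁, u t ∈ Kn n) → SolvesFK V F (Set.Icc T₀ T₁) u →
      (∀ j : ℤ, ContDiffOn ℝ 2 (fun t => u t j) (Set.Icc T₀ T₁)) →
      IsCoopSolution T₀ T₁ (fun t j => derivWithin (fun s => u s j) (Set.Icc T₀ T₁) t)) := by
  refine ⟨coop_part1 hδ hV hper htwist n T₀ T₁ u₁ u₂ hu₁K hu₂K hu₁ hu₂, ?_⟩
  intro u hFc huK hu _
  exact coop_part2 hδ hV hper htwist n T₀ T₁ hT u hFc huK hu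
end
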